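/- arXiv:2103.08460 — 5 statements merged into one kernel-verified Lean document; each statement's English description precedes it below -/
import Mathlib

section
/- Let ω ∈ 𝕋 and let x = (a b; c d) ∈ D_ω. Write x_𝔨 = (a 0; 0 d) and x_𝔰 = (0 b; c 0) for the block-diagonal and block-antidiagonal parts of x. Then for every m ≥ 0, (x_𝔰)^{2m} = (−1)^m (x_𝔨)^{2m}, and (x_𝔨)^{2m} is the block-diagonal matrix diag(a^{2m}, d^{2m}). -/
open scoped Classical
open Matrix

noncomputable section

/-- A partial permutation matrix: entries in `{0,1}`, at most one `1` in each row
and in each column. -/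
def IsPartialPerm {m n : ℕ} (τ : Matrix (Fin m) (Fin n) ℂ) : Prop :=
  (∀ i j, τ i j = 0 ∨ τ i j = 1) ∧
  (∀ i j j', τ i j = 1 → τ i j' = 1 → j = j') ∧
  (∀ i i' j, τ i j = 1 → τ i' j = 1 → i = i')

/-- `(p+q) × r` complex matrices, rows indexed by `Fin p ⊕ Fin q`. -/
abbrev MatT (p q r : ℕ) := Matrix (Fin p ⊕ Fin q) (Fin r) ℂ

/-- The set `𝕋`: `(p+q) × r` matrices of rank `r` whose top `p × r` and bottom
`q × r` blocks are partial permutation matrices. -/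
def InT {p q r : ℕ} (ω : MatT p q r) : Prop :=
  ω.rank = r ∧
  IsPartialPerm (Matrix.of fun (i : Fin p) (c : Fin r) => ω (Sum.inl i) c) ∧
  IsPartialPerm (Matrix.of fun (j : Fin q) (c : Fin r) => ω (Sum.inr j) c)

/-- The permutation matrix of `w`: `(P_w)_{i,j} = 1` iff `i = w j`. -/
def permMat {r : ℕ} (w : Equiv.Perm (Fin r)) : Matrix (Fin r) (Fin r) ℂ :=
  Matrix.of fun i j => if i = w j then 1 else 0

/-- `[ω]`, the column space of `ω`, as a subspace of `ℂ^{p+q}`. -/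
def colSpace {p q r : ℕ} (ω : MatT p q r) : Submodule ℂ (Fin p ⊕ Fin q → ℂ) :=
  LinearMap.range ω.mulVecLin

/-- The conormal direction `D_ω`: block matrices `(a b; c d)` with `a, d` strictly
upper triangular, column space contained in `[ω]`, and `[ω]` contained in the
kernel. -/
def Dset {p q r : ℕ} (ω : MatT p q r) :
    Set (Matrix (Fin p ⊕ Fin q) (Fin p ⊕ Fin q) ℂ) :=
  {x | (∀ i j : Fin p, j ≤ i → x (Sum.inl i) (Sum.inl j) = 0) ∧
       (∀ i j : Fin q, j ≤ i → x (Sum.inr i) (Sum.inr j) = 0) ∧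
       LinearMap.range x.mulVecLin ≤ colSpace ω ∧
       colSpace ω ≤ LinearMap.ker x.mulVecLin}

/-- for `x = (a b; c d) ∈ D_ω`, the even powers of
`x_𝔰 = (0 b; c 0)` equal `(−1)^m` times the even powers of `x_𝔨 = (a 0; 0 d)`,
which are block diagonal. -/
theorem even_powers_of_antidiagonal_part (p q r : ℕ) (hr : r ≤ p + q)
    (ω : MatT p q r) (hω : InT ω)
    (a : Matrix (Fin p) (Fin p) ℂ) (b : Matrix (Fin p) (Fin q) ℂ)
    (c : Matrix (Fin q) (Fin p) ℂ) (d : Matrix (Fin q) (Fin q) ℂ)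
    (hx : Matrix.fromBlocks a b c d ∈ Dset ω) :
    ∀ m : ℕ,
      (Matrix.fromBlocks 0 b c 0) ^ (2 * m) =
        ((-1 : ℂ) ^ m) • ((Matrix.fromBlocks a 0 0 d) ^ (2 * m)) ∧
      (Matrix.fromBlocks a 0 0 d) ^ (2 * m) =
        Matrix.fromBlocks (a ^ (2 * m)) 0 0 (d ^ (2 * m)) := by

  obtain ⟨-, -, hrange, hker⟩ := hx
  have hx2 : (Matrix.fromBlocks a b c d) * (Matrix.fromBlocks a b c d) = 0 := by
    ext i j
    have hm : (Matrix.fromBlocks a b c d).mulVecLin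
        ((Matrix.fromBlocks a b c d).mulVecLin (Pi.single j 1)) = 0 :=
      hker (hrange ⟨Pi.single j 1, rfl⟩)
    rw [Matrix.mulVecLin_apply, Matrix.mulVecLin_apply, Matrix.mulVec_mulVec] at hm
    simpa [Matrix.mulVec_single] using congrFun hm i
  rw [Matrix.fromBlocks_multiply] at hx2
  have h11 : a * a + b * c = 0 := by
    ext i j
    simpa using congrFun (congrFun hx2 (Sum.inl i)) (Sum.inl j)
  have h22 : c * b + d * d = 0 := by
    ext i j
    simpa using congrFun (congrFun hx2 (Sum.inr i)) (Sum.inr j)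
  have hbc : b * c = -(a * a) := by
    rw [add_comm] at h11; exact eq_neg_of_add_eq_zero_left h11
  have hcb : c * b = -(d * d) := eq_neg_of_add_eq_zero_left h22
  have hs2 : (Matrix.fromBlocks 0 b c 0) * (Matrix.fromBlocks 0 b c 0) =
      -((Matrix.fromBlocks a 0 0 d) * (Matrix.fromBlocks a 0 0 d)) := by
    simp [Matrix.fromBlocks_multiply, hbc, hcb, Matrix.fromBlocks_neg]
  intro m
  have hk : ∀ n : ℕ, (Matrix.fromBlocks a 0 0 d) ^ n =
      Matrix.fromBlocks (a ^ n) 0 0 (d ^ n) := by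
    intro n
    induction n with
    | zero => simp [Matrix.fromBlocks_one]
    | succ n ih => rw [pow_succ, pow_succ, pow_succ, ih, Matrix.fromBlocks_multiply]; simp
  refine ⟨?_, hk (2 * m)⟩
  rw [pow_mul, pow_mul, sq, sq, hs2, neg_pow]
  have hone : (-1 : Matrix (Fin p ⊕ Fin q) (Fin p ⊕ Fin q) ℂ) = (-1 : ℂ) • 1 := by
    simp
  rw [hone, smul_pow, one_pow, smul_mul_assoc, one_mul]
end
end

section
/- Let ω ∈ 𝕋 and let x = (a b; c d) ∈ D_ω. Write x_𝔰 = (0 b; c 0) for the block-antidiagonal part of x, and let τ be the p×q matrix with τ_{i,j} = 1 if j ∈ J and i = σ(j), and τ_{i,j} = 0 otherwise. Then for every m ≥ 0, the lower-left q×p block of (x_𝔰)^{2m+1} equals (−1)^m (c τ)^{2m} c. -/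
open scoped Classical
open Matrix

noncomputable section

/-- `i ∈ I`: some column of `ω` has a `1` in row `i` (top block) and a `1` in some
bottom row. -/
def memI {p q r : ℕ} (ω : MatT p q r) (i : Fin p) : Prop :=
  ∃ c, ω (Sum.inl i) c = 1 ∧ ∃ j : Fin q, ω (Sum.inr j) c = 1

/-- `i ∈ L`: some column of `ω` has a `1` in row `i` (top block) and no other
nonzero entry. -/
def memL {p q r : ℕ} (ω : MatT p q r) (i : Fin p) : Prop :=
  ∃ c, ω (Sum.inl i) c = 1 ∧ ∀ k, k ≠ Sum.inl i → ω k c = 0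

/-- `i ∈ L'`: row `i` of the top block is zero. -/
def memL' {p q r : ℕ} (ω : MatT p q r) (i : Fin p) : Prop :=
  ∀ c, ω (Sum.inl i) c = 0

/-- `j ∈ J`: some column of `ω` has a `1` in row `p+j` and a `1` in some top row. -/
def memJ {p q r : ℕ} (ω : MatT p q r) (j : Fin q) : Prop :=
  ∃ c, ω (Sum.inr j) c = 1 ∧ ∃ i : Fin p, ω (Sum.inl i) c = 1

/-- `j ∈ M`: some column of `ω` has a `1` in row `p+j` and no other nonzero entry. -/
def memM {p q r : ℕ} (ω : MatT p q r) (j : Fin q) : Prop :=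
  ∃ c, ω (Sum.inr j) c = 1 ∧ ∀ k, k ≠ Sum.inr j → ω k c = 0

/-- `j ∈ M'`: row `p+j` of `ω` (i.e. row `j` of the bottom block) is zero. -/
def memM' {p q r : ℕ} (ω : MatT p q r) (j : Fin q) : Prop :=
  ∀ c, ω (Sum.inr j) c = 0

/-- The `p × q` matrix `τ` with `τ_{i,j} = 1` iff `j ∈ J` and `i = σ(j)`. -/
def tauMat {p q r : ℕ} (ω : MatT p q r) (σ : Fin q → Fin p) :
    Matrix (Fin p) (Fin q) ℂ :=
  Matrix.of fun i j => if memJ ω j ∧ i = σ j then 1 else 0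

/-!
Squaring `x_𝔰 = (0 b; c 0)` gives `diag(bc, cb)`, so the lower-left block of `x_𝔰^(2m+1)` is
`(cb)^m c`. Every column `w` of `ω` has at most one `1` in its top part `w₁` and at most one in its
bottom part `w₂`, and `τ` is built so that `τ w₂ = w₁` whenever `w₂ ≠ 0`; when `w₂ = 0` the kernel
condition `x ω = 0` forces `c w₁ = 0`. Hence `c ω₁ = cτ ω₂`, and writing `x = ω y` (the range
condition) turns this and `c ω₁ + d ω₂ = 0` into `d c = -(cτ) c` and `c b = (cτ) d`. Since
`(cτ)^k c = c (τc)^k`, these give `(cb)((cτ)^k c) = -(cτ)^(k+2) c`, and induction on `m` finishes.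
-/

namespace Matrix

variable {R : Type*} {l m n k : Type*} [Fintype m]

theorem fromBlocks_zero_zero_pow_odd [Fintype n] [Semiring R] [DecidableEq m] [DecidableEq n]
    (b : Matrix m n R) (c : Matrix n m R) (k : ℕ) :
    fromBlocks 0 b c 0 ^ (2 * k + 1) = fromBlocks 0 ((b * c) ^ k * b) ((c * b) ^ k * c) 0 := by
  have hsq : fromBlocks 0 b c 0 ^ 2 = fromBlocks (b * c) 0 0 (c * b) := by
    simp [sq, fromBlocks_multiply]
  rw [pow_succ, pow_mul, hsq, fromBlocks_diagonal_pow]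
  simp [fromBlocks_multiply]

theorem pow_mul_mul_eq_mul_mul_pow [Fintype n] [Semiring R] [DecidableEq m] [DecidableEq n]
    (c : Matrix n m R) (τ : Matrix m n R) (k : ℕ) :
    (c * τ) ^ k * c = c * (τ * c) ^ k := by
  induction k with
  | zero => simp
  | succ k ih => simp only [pow_succ', Matrix.mul_assoc, ih]

theorem mul_pow_mul_eq_neg_one_pow_smul [Fintype n] [CommRing R] [DecidableEq m] [DecidableEq n]
    {b τ : Matrix m n R} {c : Matrix n m R} {d : Matrix n n R}
    (hdc : d * c = -(c * τ * c)) (hcb : c * b = c * τ * d) (k : ℕ) :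
    (c * b) ^ k * c = (-1 : R) ^ k • ((c * τ) ^ (2 * k) * c) := by
  have hd : ∀ j : ℕ, d * ((c * τ) ^ j * c) = -((c * τ) ^ (j + 1) * c) := fun j => by
    rw [pow_mul_mul_eq_mul_mul_pow, ← Matrix.mul_assoc, hdc, Matrix.neg_mul, Matrix.mul_assoc,
      ← pow_mul_mul_eq_mul_mul_pow, ← Matrix.mul_assoc, ← pow_succ']
  induction k with
  | zero => simp
  | succ k ih =>
    rw [pow_succ', Matrix.mul_assoc, ih, Matrix.mul_smul, hcb, Matrix.mul_assoc, hd,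
      Matrix.mul_neg, ← Matrix.mul_assoc, ← pow_succ', show 2 * k + 1 + 1 = 2 * (k + 1) by ring,
      pow_succ (-1 : R), mul_neg_one, neg_smul, smul_neg]

theorem mul_eq_zero_of_range_le_ker [Fintype k] [CommSemiring R] [DecidableEq k]
    {A : Matrix m k R} {B : Matrix l m R}
    (h : LinearMap.range A.mulVecLin ≤ LinearMap.ker B.mulVecLin) : B * A = 0 := by
  ext i j
  have hj : B *ᵥ (A *ᵥ Pi.single j 1) = 0 := h ⟨Pi.single j 1, rfl⟩
  rw [mulVec_mulVec, mulVec_single_one] at hj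
  exact congrFun hj i

theorem exists_mul_eq_of_range_le_range [Fintype k] [CommSemiring R] [DecidableEq k]
    {A : Matrix l m R} {B : Matrix l k R}
    (h : LinearMap.range B.mulVecLin ≤ LinearMap.range A.mulVecLin) :
    ∃ Y : Matrix m k R, A * Y = B := by
  choose v hv using fun j : k => h ⟨Pi.single j 1, rfl⟩
  refine ⟨(of v)ᵀ, ?_⟩
  ext i j
  have hj : A *ᵥ v j = B *ᵥ Pi.single j 1 := hv j
  rw [mulVec_single_one] at hj
  exact congrFun hj i

theorem mul_eq_mul_mul_of_forall_col [Fintype n] [Ring R] {U : Matrix m k R}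
    {V : Matrix n k R} {c : Matrix l m R} {d : Matrix l n R} {τ : Matrix m n R}
    (hker : c * U + d * V = 0)
    (hcol : ∀ t, (∀ j, V j t = 0) ∨ ∀ i, (τ * V) i t = U i t) :
    c * U = c * τ * V := by
  ext s t
  rcases hcol t with hV | hUV
  · have hst := congrFun₂ hker s t
    simp only [add_apply, mul_apply, hV, mul_zero, Finset.sum_const_zero, add_zero,
      zero_apply] at hst
    simp [mul_apply, hV, hst]
  · rw [Matrix.mul_assoc, mul_apply, mul_apply]
    simp only [hUV]

end Matrix

namespace IsPartialPerm

variable {m n : ℕ} {τ : Matrix (Fin m) (Fin n) ℂ}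

theorem apply_eq_zero_of_ne_one (h : IsPartialPerm τ) {i : Fin m} {j : Fin n}
    (hij : τ i j ≠ 1) : τ i j = 0 :=
  (h.1 i j).resolve_right hij

theorem apply_eq_ite_of_apply_eq_one (h : IsPartialPerm τ) {i : Fin m} {j : Fin n}
    (hij : τ i j = 1) (i' : Fin m) : τ i' j = if i' = i then 1 else 0 := by
  split_ifs with hi
  · rwa [hi]
  · exact h.apply_eq_zero_of_ne_one fun h' => hi (h.2.2 i' i j h' hij)

end IsPartialPerm

theorem toRows₂_col_eq_zero_or_tauMat_mul_col_eq {p q r : ℕ} {ω : MatT p q r}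
    (hU : IsPartialPerm ω.toRows₁) (hV : IsPartialPerm ω.toRows₂) {σ : Fin q → Fin p}
    (hσ : ∀ j, memJ ω j → ∃ c, ω (Sum.inl (σ j)) c = 1 ∧ ω (Sum.inr j) c = 1) (t : Fin r) :
    (∀ j, ω (Sum.inr j) t = 0) ∨ ∀ i, (tauMat ω σ * ω.toRows₂) i t = ω (Sum.inl i) t := by
  by_cases hbot : ∃ j, ω.toRows₂ j t = 1
  swap
  · push Not at hbot
    exact Or.inl fun j => hV.apply_eq_zero_of_ne_one (hbot j)
  obtain ⟨j₀, hj₀⟩ := hbot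
  refine Or.inr fun i => ?_
  have hcolV : ∀ j, ω (Sum.inr j) t = if j = j₀ then 1 else 0 :=
    hV.apply_eq_ite_of_apply_eq_one hj₀
  have hprod : (tauMat ω σ * ω.toRows₂) i t = tauMat ω σ i j₀ := by
    simp [mul_apply, hcolV]
  rw [hprod]
  by_cases hJ : memJ ω j₀
  · obtain ⟨t', htop, hjt'⟩ := hσ j₀ hJ
    obtain rfl : t' = t := hV.2.1 j₀ t' t hjt' hj₀
    have hcolU : ∀ i, ω (Sum.inl i) t' = if i = σ j₀ then 1 else 0 :=
      hU.apply_eq_ite_of_apply_eq_one htop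
    simp [tauMat, hJ, hcolU]
  · have htop : ω.toRows₁ i t ≠ 1 := fun h => hJ ⟨t, hj₀, i, h⟩
    have hzero : ω (Sum.inl i) t = 0 := hU.apply_eq_zero_of_ne_one htop
    simp [tauMat, hJ, hzero]

theorem lower_block_relations_of_mem_Dset {p q r : ℕ} {ω : MatT p q r} (hω : InT ω)
    {σ : Fin q → Fin p}
    (hσ : ∀ j, memJ ω j → ∃ c, ω (Sum.inl (σ j)) c = 1 ∧ ω (Sum.inr j) c = 1)
    {a : Matrix (Fin p) (Fin p) ℂ} {b : Matrix (Fin p) (Fin q) ℂ}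
    {c : Matrix (Fin q) (Fin p) ℂ} {d : Matrix (Fin q) (Fin q) ℂ}
    (hx : fromBlocks a b c d ∈ Dset ω) :
    d * c = -(c * tauMat ω σ * c) ∧ c * b = c * tauMat ω σ * d := by
  obtain ⟨-, -, hrange, hker⟩ := hx
  have hUV : c * ω.toRows₁ + d * ω.toRows₂ = 0 := by
    have h := mul_eq_zero_of_range_le_ker hker
    rw [← fromRows_toRows ω, fromBlocks_mul_fromRows, ← fromRows_zero] at h
    exact (fromRows_inj h).2
  have hkey : c * ω.toRows₁ = c * tauMat ω σ * ω.toRows₂ :=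
    mul_eq_mul_mul_of_forall_col hUV
      (toRows₂_col_eq_zero_or_tauMat_mul_col_eq hω.2.1 hω.2.2 hσ)
  obtain ⟨y, hy⟩ := exists_mul_eq_of_range_le_range hrange
  rw [← fromRows_toRows ω, fromRows_mul, ← fromRows_fromCols_eq_fromBlocks] at hy
  obtain ⟨hy₁, hy₂⟩ := fromRows_inj hy
  have hτ := congrArg (· * y) hkey
  have hd := congrArg (· * y) (eq_neg_of_add_eq_zero_left hUV)
  simp only [Matrix.mul_assoc, Matrix.neg_mul, hy₁, hy₂, mul_fromCols, fromCols_neg] at hτ hd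
  obtain ⟨hca, hcb⟩ := fromCols_inj hτ
  obtain ⟨hca', -⟩ := fromCols_inj hd
  refine ⟨?_, by rw [hcb, Matrix.mul_assoc]⟩
  rw [← neg_eq_iff_eq_neg.mpr hca', hca, Matrix.mul_assoc]

theorem odd_powers_lower_left_block_general (p q r : ℕ)
    (ω : MatT p q r) (hω : InT ω) (σ : Fin q → Fin p)
    (hσ : ∀ j, memJ ω j → ∃ c, ω (Sum.inl (σ j)) c = 1 ∧ ω (Sum.inr j) c = 1)
    (a : Matrix (Fin p) (Fin p) ℂ) (b : Matrix (Fin p) (Fin q) ℂ)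
    (c : Matrix (Fin q) (Fin p) ℂ) (d : Matrix (Fin q) (Fin q) ℂ)
    (hx : Matrix.fromBlocks a b c d ∈ Dset ω) :
    ∀ m : ℕ,
      ((Matrix.fromBlocks 0 b c 0) ^ (2 * m + 1)).toBlocks₂₁ =
        ((-1 : ℂ) ^ m) • ((c * tauMat ω σ) ^ (2 * m) * c) := by
  intro m
  obtain ⟨hdc, hcb⟩ := lower_block_relations_of_mem_Dset hω hσ hx
  rw [fromBlocks_zero_zero_pow_odd, toBlocks_fromBlocks₂₁,
    mul_pow_mul_eq_neg_one_pow_smul hdc hcb]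

/-- for `x = (a b; c d) ∈ D_ω`, the lower-left block of the odd
power `x_𝔰^{2m+1}` equals `(−1)^m (cτ)^{2m} c`. -/
theorem odd_powers_lower_left_block (p q r : ℕ) (hr : r ≤ p + q)
    (ω : MatT p q r) (hω : InT ω) (σ : Fin q → Fin p)
    (hσ : ∀ j, memJ ω j → ∃ c, ω (Sum.inl (σ j)) c = 1 ∧ ω (Sum.inr j) c = 1)
    (a : Matrix (Fin p) (Fin p) ℂ) (b : Matrix (Fin p) (Fin q) ℂ)
    (c : Matrix (Fin q) (Fin p) ℂ) (d : Matrix (Fin q) (Fin q) ℂ)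
    (hx : Matrix.fromBlocks a b c d ∈ Dset ω) :
    ∀ m : ℕ,
      ((Matrix.fromBlocks 0 b c 0) ^ (2 * m + 1)).toBlocks₂₁ =
        ((-1 : ℂ) ^ m) • ((c * tauMat ω σ) ^ (2 * m) * c) :=
  odd_powers_lower_left_block_general p q r ω hω σ hσ a b c d hx
end
end

section
/- Let ω ∈ 𝕋 and let x = (a b; c d) ∈ D_ω, and let τ be the p×q matrix with τ_{i,j} = 1 if j ∈ J and i = σ(j), and τ_{i,j} = 0 otherwise. Then for every ℓ ≥ 1, (−1)^ℓ d^ℓ c = (c τ)^ℓ c. -/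
open scoped Classical
open Matrix

noncomputable section

/-- for `x = (a b; c d) ∈ D_ω` and `ℓ ≥ 1`,
`(−1)^ℓ d^ℓ c = (cτ)^ℓ c`. -/
theorem d_power_c_eq_c_tau_power_c (p q r : ℕ) (hr : r ≤ p + q)
    (ω : MatT p q r) (hω : InT ω) (σ : Fin q → Fin p)
    (hσ : ∀ j, memJ ω j → ∃ c, ω (Sum.inl (σ j)) c = 1 ∧ ω (Sum.inr j) c = 1)
    (a : Matrix (Fin p) (Fin p) ℂ) (b : Matrix (Fin p) (Fin q) ℂ)
    (c : Matrix (Fin q) (Fin p) ℂ) (d : Matrix (Fin q) (Fin q) ℂ)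
    (hx : Matrix.fromBlocks a b c d ∈ Dset ω) :
    ∀ l : ℕ, 1 ≤ l →
      ((-1 : ℂ) ^ l) • (d ^ l * c) = (c * tauMat ω σ) ^ l * c := by
  obtain ⟨hrank, hP1, hP2⟩ := hω
  obtain ⟨ha, hduc, hrange, hker⟩ := hx
  set τ := tauMat ω σ with hτdef
  -- columns of ω lie in colSpace ω
  have hcol : ∀ co : Fin r, (fun k => ω k co) ∈ colSpace ω := by
    intro co
    refine ⟨Pi.single co 1, ?_⟩
    ext k
    simp [Matrix.mulVecLin_apply, Matrix.mulVec_single]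
  have hxcol : ∀ co : Fin r,
      (Matrix.fromBlocks a b c d).mulVec (fun k => ω k co) = 0 := by
    intro co
    have h := hker (hcol co)
    rw [LinearMap.mem_ker] at h
    simpa [Matrix.mulVecLin_apply] using h
  -- Fact J : for j ∈ J, d j' j = - c j' (σ j)
  have factJ : ∀ j : Fin q, memJ ω j → ∀ j' : Fin q, d j' j = - c j' (σ j) := by
    intro j hj j'
    obtain ⟨co, h1, h2⟩ := hσ j hj
    have hv : (fun k => ω k co) =
        Pi.single (Sum.inl (σ j)) 1 + Pi.single (Sum.inr j) (1:ℂ) := by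
      funext k
      rcases k with i | j''
      · by_cases hi : i = σ j
        · subst hi
          simp [Pi.single_apply, h1]
        · have h0 : ω (Sum.inl i) co = 0 := by
            rcases hP1.1 i co with h | h
            · exact h
            · exact absurd (hP1.2.2 i (σ j) co h h1) hi
          simp [Pi.single_apply, h0, hi]
      · by_cases hjj : j'' = j
        · subst hjj
          simp [Pi.single_apply, h2]
        · have h0 : ω (Sum.inr j'') co = 0 := by
            rcases hP2.1 j'' co with h | h
            · exact h
            · exact absurd (hP2.2.2 j'' j co h h2) hjj
          simp [Pi.single_apply, h0, hjj]
    have h0 := hxcol co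
    rw [hv, Matrix.mulVec_add] at h0
    have h3 := congrFun h0 (Sum.inr j')
    simp [Matrix.mulVec_single] at h3
    linear_combination h3
  -- Fact M : for k ∈ M, d j' k = 0
  have factM : ∀ k : Fin q, memM ω k → ∀ j' : Fin q, d j' k = 0 := by
    intro k hk j'
    obtain ⟨co, h1, h2⟩ := hk
    have hv : (fun k' => ω k' co) = Pi.single (Sum.inr k) (1:ℂ) := by
      funext k'
      by_cases hk' : k' = Sum.inr k
      · subst hk'; simp [h1, Pi.single_apply]
      · simp [h2 k' hk', Pi.single_apply, hk']
    have h0 := hxcol co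
    rw [hv] at h0
    have h3 := congrFun h0 (Sum.inr j')
    simpa [Matrix.mulVec_single] using h3
  -- Fact M' : for k ∈ M', c k i = 0
  have factM' : ∀ k : Fin q, memM' ω k → ∀ i : Fin p, c k i = 0 := by
    intro k hk i
    have hmem : (Matrix.fromBlocks a b c d).mulVec (Pi.single (Sum.inl i) 1) ∈
        colSpace ω := hrange ⟨Pi.single (Sum.inl i) 1, rfl⟩
    obtain ⟨w, hw⟩ := hmem
    have h3 := congrFun hw (Sum.inr k)
    have hk2 : ∀ c0, ω (Sum.inr k) c0 = 0 := hk
    have hL : (ω.mulVecLin w) (Sum.inr k) = 0 := by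
      simp [Matrix.mulVecLin_apply, Matrix.mulVec, dotProduct, hk2]
    rw [hL] at h3
    have h4 := h3.symm
    simpa [Matrix.mulVec_single] using h4
  -- trichotomy
  have tri : ∀ k : Fin q, ¬ memJ ω k → memM ω k ∨ memM' ω k := by
    intro k hk
    by_cases hz : ∀ co, ω (Sum.inr k) co = 0
    · exact Or.inr hz
    · push_neg at hz
      obtain ⟨co, hco⟩ := hz
      have h1 : ω (Sum.inr k) co = 1 := (hP2.1 k co).resolve_left hco
      refine Or.inl ⟨co, h1, ?_⟩
      intro k' hk'
      rcases k' with i | j''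
      · rcases hP1.1 i co with h | h
        · exact h
        · exact absurd ⟨co, h1, i, h⟩ hk
      · rcases hP2.1 j'' co with h | h
        · exact h
        · exact absurd (hP2.2.2 j'' k co h h1) (by simpa using hk')
  -- evaluation of c * τ
  have hτa : ∀ (j' k : Fin q),
      (c * τ) j' k = if memJ ω k then c j' (σ k) else 0 := by
    intro j' k
    rw [Matrix.mul_apply]
    by_cases hk : memJ ω k
    · rw [if_pos hk]
      have : ∀ i, τ i k = if i = σ k then (1:ℂ) else 0 := by
        intro i; simp [hτdef, tauMat, hk]
      simp [this, mul_ite, mul_one, mul_zero]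
    · rw [if_neg hk]
      have : ∀ i, τ i k = 0 := by
        intro i; simp [hτdef, tauMat, hk]
      simp [this]
  -- the key identity
  have key : d * c = -((c * τ) * c) := by
    ext j i
    rw [Matrix.mul_apply, Matrix.neg_apply, Matrix.mul_apply, ← Finset.sum_neg_distrib]
    apply Finset.sum_congr rfl
    intro k _
    by_cases hk : memJ ω k
    · rw [factJ k hk j, hτa j k, if_pos hk]; ring
    · rw [hτa j k, if_neg hk]
      rcases tri k hk with hM | hM'
      · rw [factM k hM j]; ring
      · rw [factM' k hM' i]; ring
  -- swap lemma
  have swap : ∀ l : ℕ, (c * τ) ^ l * c = c * (τ * c) ^ l := by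
    intro l
    induction l with
    | zero => simp
    | succ n ih =>
      have h5 : (c * τ) ^ (n + 1) * c = ((c * τ) ^ n * c) * (τ * c) := by
        rw [pow_succ, Matrix.mul_assoc, Matrix.mul_assoc c τ c, ← Matrix.mul_assoc]
      rw [h5, ih, Matrix.mul_assoc, ← pow_succ]
  -- step lemma
  have step : ∀ m : ℕ, d * ((c * τ) ^ m * c) = -((c * τ) ^ (m + 1) * c) := by
    intro m
    rw [swap m, swap (m + 1), ← Matrix.mul_assoc, key, pow_succ']
    simp only [Matrix.neg_mul, Matrix.mul_assoc]
  -- main induction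
  have aux : ∀ m : ℕ, ((-1 : ℂ) ^ (m + 1)) • (d ^ (m + 1) * c) = (c * τ) ^ (m + 1) * c := by
    intro m
    induction m with
    | zero =>
      simp only [pow_one, zero_add]
      rw [key]
      simp
    | succ n ih =>
      have h1 : ((-1:ℂ) ^ (n + 1)) * ((-1:ℂ) ^ (n + 1)) = 1 := by
        rw [← pow_add]
        exact Even.neg_one_pow ⟨n + 1, by ring⟩
      have hd : d ^ (n + 1 + 1) * c = d * (d ^ (n + 1) * c) := by
        rw [pow_succ', Matrix.mul_assoc]
      have hdl : d ^ (n + 1) * c = ((-1:ℂ) ^ (n + 1)) • ((c * τ) ^ (n + 1) * c) := by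
        have := congrArg (fun y => ((-1:ℂ) ^ (n + 1)) • y) ih
        simpa [smul_smul, h1] using this
      rw [hd, hdl, Matrix.mul_smul, step (n + 1), smul_smul]
      have h2 : ((-1:ℂ) ^ (n + 1 + 1)) * ((-1:ℂ) ^ (n + 1)) = -1 := by
        rw [← pow_add]
        exact Odd.neg_one_pow ⟨n + 1, by ring⟩
      rw [h2]
      simp
  intro l hl
  rcases l with _ | m
  · omega
  · exact aux m
end
end

section
/- Let ω ∈ 𝕋 with associated data (I, J, L, L′, M, M′, σ), let ς be the (I∪L′)×(J∪M) matrix with ς_{i,j} = 1 if j ∈ J and i = σ(j) and ς_{i,j} = 0 otherwise, and let Γ be the space of complex matrices γ indexed by (J∪M)×(I∪L′) such that both products ςγ (indexed by (I∪L′)×(I∪L′)) and γς (indexed by (J∪M)×(J∪M)) are strictly upper triangular with respect to the natural integer order on the index sets. Let η₁(γ) be the q×p matrix extending γ by zero, and let τ be the p×q matrix with τ_{i,j} = 1 if j ∈ J and i = σ(j), else 0. Then η₁ restricts to a linear bijection from Γ onto the set C = {c ∈ Mat_{q×p}(ℂ) : there exist a, b, d such that (a b; c d) ∈ D_ω}.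 Moreover, for every γ ∈ Γ with c = η₁(γ) and every ℓ ≥ 0, η₁((γς)^ℓ γ) = (c τ)^ℓ c. -/
open scoped Classical
open Matrix

noncomputable section

/-- The index set `I ∪ L'` (as a subtype of `Fin p`). -/
def IUL' {p q r : ℕ} (ω : MatT p q r) := {i : Fin p // memI ω i ∨ memL' ω i}

/-- The index set `J ∪ M` (as a subtype of `Fin q`). -/
def JUM {p q r : ℕ} (ω : MatT p q r) := {j : Fin q // memJ ω j ∨ memM ω j}

instance {p q r : ℕ} (ω : MatT p q r) : Finite (IUL' ω) := by
  unfold IUL'; infer_instance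

instance {p q r : ℕ} (ω : MatT p q r) : Finite (JUM ω) := by
  unfold JUM; infer_instance

noncomputable instance {p q r : ℕ} (ω : MatT p q r) : Fintype (IUL' ω) :=
  Fintype.ofFinite _

noncomputable instance {p q r : ℕ} (ω : MatT p q r) : Fintype (JUM ω) :=
  Fintype.ofFinite _

instance {p q r : ℕ} (ω : MatT p q r) : DecidableEq (IUL' ω) := by
  unfold IUL'; infer_instance

instance {p q r : ℕ} (ω : MatT p q r) : DecidableEq (JUM ω) := by
  unfold JUM; infer_instance

/-- The matrix `ς`, indexed by `(I∪L') × (J∪M)`, with `ς_{i,j} = 1` iff `j ∈ J`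
and `i = σ(j)`. -/
def sigMat {p q r : ℕ} (ω : MatT p q r) (σ : Fin q → Fin p) :
    Matrix (IUL' ω) (JUM ω) ℂ :=
  Matrix.of fun i j => if memJ ω j.1 ∧ i.1 = σ j.1 then 1 else 0

/-- The space `Γ`: matrices `γ` indexed by `(J∪M) × (I∪L')` such that `ςγ` and
`γς` are strictly upper triangular for the natural integer order. -/
def GammaSet {p q r : ℕ} (ω : MatT p q r) (σ : Fin q → Fin p) :
    Set (Matrix (JUM ω) (IUL' ω) ℂ) :=
  {γ | (∀ i i' : IUL' ω, i'.1 ≤ i.1 → (sigMat ω σ * γ) i i' = 0) ∧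
       (∀ j j' : JUM ω, j'.1 ≤ j.1 → (γ * sigMat ω σ) j j' = 0)}

/-- The extension-by-zero map `η₁` from `(J∪M) × (I∪L')`-matrices to `q × p`
matrices. -/
def eta1 {p q r : ℕ} (ω : MatT p q r) (γ : Matrix (JUM ω) (IUL' ω) ℂ) :
    Matrix (Fin q) (Fin p) ℂ :=
  Matrix.of fun j i =>
    if h : (memJ ω j ∨ memM ω j) ∧ (memI ω i ∨ memL' ω i)
    then γ ⟨j, h.1⟩ ⟨i, h.2⟩ else 0

/-!
Write `c = η₁ γ`. Extension by zero is conjugation by the inclusion matrices `P` of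
`J ∪ M ⊆ [q]` and `Q` of `I ∪ L' ⊆ [p]`: `c = P γ Qᵀ`, and `τ = Q ς Pᵀ` because `σ(J) ⊆ I`.
As `Pᵀ P = 1` and `Qᵀ Q = 1`, this gives `τ c = Q (ς γ) Qᵀ`, `c τ = P (γ ς) Pᵀ` and the power
identity, and shows that `γ ∈ Γ` iff `τ c` and `c τ` are strictly upper triangular.

The columns of `ω` are `e_{σ j} + e_{p+j}` for `j ∈ J`, `e_i` for `i ∈ L` and `e_{p+j}` for
`j ∈ M`. So for `x ∈ D_ω`, row `p+j` of `x` vanishes for `j ∈ M'`, row `σ j` equals row `p+j`,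
column `i` vanishes for `i ∈ L`, and column `σ j` is minus column `p+j`. For the lower-left
block `c` of `x` this says that `c` is supported on `(J ∪ M) × (I ∪ L')`, that the rows of `τ c`
are rows of the upper-left block or zero, and that the columns of `c τ` are columns of minus the
lower-right block or zero; so the restriction of `c` lies in `Γ` and `η₁` maps it back to `c`.

Conversely `x = (τ; 1) c (1, -τ)` lies in `D_ω`: its columns lie in `[ω]` because
`(τ; 1) c = ω ω₂ᵀ c` (as `ω₁ ω₂ᵀ = τ` and `ω₂ ω₂ᵀ` fixes the rows `J ∪ M`), and `x ω = 0`
because `c` only sees the rows `I ∪ L'` of `ω₁ - τ ω₂`, which vanish.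
-/

namespace Matrix

variable {l m m' n n' o o' α β : Type*}

def StrictBlockTriangular [Zero α] [LE β] (M : Matrix m m α) (b : m → β) : Prop :=
  ∀ ⦃i j⦄, b j ≤ b i → M i j = 0

theorem StrictBlockTriangular.neg [AddGroup α] [LE β] {M : Matrix m m α} {b : m → β}
    (hM : M.StrictBlockTriangular b) : (-M).StrictBlockTriangular b :=
  fun _ _ h => by rw [neg_apply, hM h, neg_zero]

def inclMatrix (α : Type*) [DecidableEq m] [Zero α] [One α] (e : m' → m) : Matrix m m' α :=
  (1 : Matrix m m α).submatrix id e

/-- For injective `e` and `f` this is `A` extended by zero. -/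
def extendZero [DecidableEq m] [DecidableEq n] [Fintype m'] [Fintype n'] [NonAssocSemiring α]
    (e : m' → m) (f : n' → n) (A : Matrix m' n' α) : Matrix m n α :=
  inclMatrix α e * A * (inclMatrix α f)ᵀ

section inclMatrix

variable [DecidableEq m] [Fintype m] [NonAssocSemiring α]

theorem mul_inclMatrix (A : Matrix l m α) (e : m' → m) :
    A * inclMatrix α e = A.submatrix id e := by
  ext i j
  simp [inclMatrix, mul_apply, one_apply]

theorem transpose_inclMatrix_mul (e : m' → m) (A : Matrix m n α) :
    (inclMatrix α e)ᵀ * A = A.submatrix e id := by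
  ext i j
  simp [inclMatrix, mul_apply, one_apply]

theorem transpose_inclMatrix_mul_inclMatrix [DecidableEq m'] {e : m' → m} (he : e.Injective) :
    (inclMatrix α e)ᵀ * inclMatrix α e = 1 := by
  rw [transpose_inclMatrix_mul, inclMatrix, submatrix_submatrix]
  exact submatrix_one e he

end inclMatrix

section extendZero

variable [DecidableEq m] [DecidableEq n] [Fintype m'] [Fintype n'] [Semiring α]
  {e : m' → m} {f : n' → n}

theorem extendZero_apply (he : e.Injective) (hf : f.Injective) (A : Matrix m' n' α)
    (i : m') (j : n') : extendZero e f A (e i) (f j) = A i j := by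
  simp [extendZero, inclMatrix, mul_apply, one_apply, he.eq_iff, hf.eq_iff]

theorem extendZero_apply_of_forall_ne_left {i : m} (hi : ∀ i', e i' ≠ i) (A : Matrix m' n' α)
    (j : n) : extendZero e f A i j = 0 := by
  simp [extendZero, inclMatrix, mul_apply, Ne.symm (hi _)]

theorem extendZero_apply_of_forall_ne_right {j : n} (hj : ∀ j', f j' ≠ j) (A : Matrix m' n' α)
    (i : m) : extendZero e f A i j = 0 := by
  simp [extendZero, inclMatrix, mul_apply, hj]

theorem extendZero_injective (he : e.Injective) (hf : f.Injective) :
    (extendZero e f : Matrix m' n' α → Matrix m n α).Injective := fun A B h => by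
  ext i j
  rw [← extendZero_apply he hf A, h, extendZero_apply he hf]

theorem extendZero_add (A B : Matrix m' n' α) :
    extendZero e f (A + B) = extendZero e f A + extendZero e f B := by
  rw [extendZero, Matrix.mul_add, Matrix.add_mul, extendZero, extendZero]

theorem extendZero_smul {R : Type*} [Monoid R] [DistribMulAction R α] [IsScalarTower R α α]
    [SMulCommClass R α α] (z : R) (A : Matrix m' n' α) :
    extendZero e f (z • A) = z • extendZero e f A := by
  rw [extendZero, Matrix.mul_smul, Matrix.smul_mul, extendZero]

theorem extendZero_mul [Fintype n] [DecidableEq n'] [DecidableEq o] [Fintype o'] {g : o' → o}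
    (hf : f.Injective) (A : Matrix m' n' α) (B : Matrix n' o' α) :
    extendZero e f A * extendZero f g B = extendZero e g (A * B) := by
  simp only [extendZero, Matrix.mul_assoc]
  rw [← Matrix.mul_assoc (inclMatrix α f)ᵀ, transpose_inclMatrix_mul_inclMatrix hf,
    Matrix.one_mul]

theorem extendZero_pow_mul [Fintype m] [DecidableEq m'] (he : e.Injective) (X : Matrix m' m' α)
    (A : Matrix m' n' α) (k : ℕ) :
    extendZero e e X ^ k * extendZero e f A = extendZero e f (X ^ k * A) := by
  induction k with
  | zero => rw [pow_zero, pow_zero, Matrix.one_mul, Matrix.one_mul]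
  | succ k ih =>
    rw [pow_succ', Matrix.mul_assoc, ih, extendZero_mul he, pow_succ', Matrix.mul_assoc]

theorem strictBlockTriangular_extendZero_iff [LE β] (he : e.Injective) (X : Matrix m' m' α)
    (b : m → β) :
    (extendZero e e X).StrictBlockTriangular b ↔ X.StrictBlockTriangular (b ∘ e) := by
  refine ⟨fun h i j hij => extendZero_apply he he X i j ▸ h hij, fun h i j hij => ?_⟩
  by_cases hi : ∃ i', e i' = i
  · by_cases hj : ∃ j', e j' = j
    · obtain ⟨i', rfl⟩ := hi
      obtain ⟨j', rfl⟩ := hj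
      rw [extendZero_apply he he]
      exact h hij
    · exact extendZero_apply_of_forall_ne_right (not_exists.mp hj) X i
  · exact extendZero_apply_of_forall_ne_left (not_exists.mp hi) X j

end extendZero

end Matrix

theorem IsPartialPerm.mul_transpose_apply {m n k : ℕ} {A : Matrix (Fin m) (Fin n) ℂ}
    {B : Matrix (Fin k) (Fin n) ℂ} (hA : IsPartialPerm A) (hB : IsPartialPerm B)
    (i : Fin m) (j : Fin k) :
    (A * Bᵀ) i j = if ∃ c, A i c = 1 ∧ B j c = 1 then 1 else 0 := by
  rw [mul_apply]
  split_ifs with h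
  · obtain ⟨c, hAc, hBc⟩ := h
    rw [Finset.sum_eq_single c]
    · rw [transpose_apply, hAc, hBc, one_mul]
    · intro c' _ hc'
      rw [(hA.1 i c').resolve_right (fun h' => hc' (hA.2.1 i c' c h' hAc)), zero_mul]
    · simp
  · refine Finset.sum_eq_zero fun c _ => ?_
    rw [transpose_apply]
    rcases hA.1 i c with h1 | h1
    · rw [h1, zero_mul]
    · rcases hB.1 j c with h2 | h2
      · rw [h2, mul_zero]
      · exact absurd ⟨c, h1, h2⟩ h

variable {p q r : ℕ} {ω : MatT p q r} {σ : Fin q → Fin p}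

namespace InT

variable (hω : InT ω)
include hω

theorem entry_cases : ∀ k c, ω k c = 0 ∨ ω k c = 1
  | .inl i, c => hω.2.1.1 i c
  | .inr j, c => hω.2.2.1 j c

theorem eq_of_row : ∀ {k c c'}, ω k c = 1 → ω k c' = 1 → c = c'
  | .inl i, c, c' => hω.2.1.2.1 i c c'
  | .inr j, c, c' => hω.2.2.2.1 j c c'

theorem eq_of_top_col {i i' c} : ω (.inl i) c = 1 → ω (.inl i') c = 1 → i = i' :=
  hω.2.1.2.2 i i' c

theorem eq_of_bot_col {j j' c} : ω (.inr j) c = 1 → ω (.inr j') c = 1 → j = j' :=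
  hω.2.2.2.2 j j' c

theorem memL_of_not {i : Fin p} (hi : ¬(memI ω i ∨ memL' ω i)) : memL ω i := by
  obtain ⟨hI, hL'⟩ := not_or.mp hi
  obtain ⟨c, hc⟩ := not_forall.mp hL'
  have hc1 := (hω.entry_cases _ c).resolve_left hc
  refine ⟨c, hc1, fun k hk => (hω.entry_cases k c).resolve_right fun hk1 => ?_⟩
  rcases k with i' | j
  · exact hk (congrArg _ (hω.eq_of_top_col hc1 hk1).symm)
  · exact hI ⟨c, hc1, j, hk1⟩

theorem memM'_of_not {j : Fin q} (hj : ¬(memJ ω j ∨ memM ω j)) : memM' ω j := by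
  obtain ⟨hJ, hM⟩ := not_or.mp hj
  by_contra hM'
  obtain ⟨c, hc⟩ := not_forall.mp hM'
  have hc1 := (hω.entry_cases _ c).resolve_left hc
  refine hM ⟨c, hc1, fun k hk => (hω.entry_cases k c).resolve_right fun hk1 => ?_⟩
  rcases k with i | j'
  · exact hJ ⟨c, hc1, i, hk1⟩
  · exact hk (congrArg _ (hω.eq_of_bot_col hc1 hk1).symm)

end InT

def IsPairing (ω : MatT p q r) (σ : Fin q → Fin p) : Prop :=
  ∀ j, memJ ω j → ∃ c, ω (.inl (σ j)) c = 1 ∧ ω (.inr j) c = 1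

namespace IsPairing

theorem memI_of_memJ (hσ : IsPairing ω σ) {j : Fin q} (hj : memJ ω j) : memI ω (σ j) := by
  obtain ⟨c, h1, h2⟩ := hσ j hj
  exact ⟨c, h1, j, h2⟩

variable (hω : InT ω) (hσ : IsPairing ω σ)
include hω hσ

theorem memJ_and_eq {i : Fin p} {j : Fin q} {c : Fin r} (h1 : ω (.inl i) c = 1)
    (h2 : ω (.inr j) c = 1) : memJ ω j ∧ σ j = i := by
  have hj : memJ ω j := ⟨c, h2, i, h1⟩
  obtain ⟨c', h1', h2'⟩ := hσ j hj
  obtain rfl := hω.eq_of_row h2 h2'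
  exact ⟨hj, hω.eq_of_top_col h1' h1⟩

theorem injOn : Set.InjOn σ {j | memJ ω j} := by
  intro j hj j' hj' h
  obtain ⟨c, h1, h2⟩ := hσ j hj
  obtain ⟨c', h1', h2'⟩ := hσ j' hj'
  rw [h] at h1
  obtain rfl := hω.eq_of_row h1 h1'
  exact hω.eq_of_bot_col h2 h2'

theorem exists_of_memI {i : Fin p} (hi : memI ω i) : ∃ j, memJ ω j ∧ σ j = i := by
  obtain ⟨c, h1, j, h2⟩ := hi
  exact ⟨j, memJ_and_eq hω hσ h1 h2⟩

theorem row_eq {j : Fin q} (hj : memJ ω j) : ω (.inl (σ j)) = ω (.inr j) := by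
  obtain ⟨c, h1, h2⟩ := hσ j hj
  funext c'
  by_cases hc : c' = c
  · rw [hc, h1, h2]
  · rw [(hω.entry_cases _ c').resolve_right (fun h => hc (hω.eq_of_row h h1)),
      (hω.entry_cases _ c').resolve_right (fun h => hc (hω.eq_of_row h h2))]

end IsPairing

theorem tauMat_mul_apply_of_forall_ne {n : Type*} {i : Fin p} (hi : ∀ j, memJ ω j → σ j ≠ i)
    (A : Matrix (Fin q) n ℂ) (k : n) : (tauMat ω σ * A) i k = 0 := by
  simp only [mul_apply, tauMat, of_apply, ite_mul, one_mul, zero_mul]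
  exact Finset.sum_eq_zero fun j _ => if_neg fun h => hi j h.1 h.2.symm

theorem mul_tauMat_apply_of_not_memJ {n : Type*} {j : Fin q} (hj : ¬memJ ω j)
    (A : Matrix n (Fin p) ℂ) (k : n) : (A * tauMat ω σ) k j = 0 := by
  simp [mul_apply, tauMat, hj]

theorem mul_tauMat_apply_of_memJ {n : Type*} {j : Fin q} (hj : memJ ω j)
    (A : Matrix n (Fin p) ℂ) (k : n) : (A * tauMat ω σ) k j = A k (σ j) := by
  simp [mul_apply, tauMat, hj]

theorem IsPairing.tauMat_mul_apply (hω : InT ω) (hσ : IsPairing ω σ) {n : Type*} {j : Fin q}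
    (hj : memJ ω j) (A : Matrix (Fin q) n ℂ) (k : n) : (tauMat ω σ * A) (σ j) k = A j k := by
  rw [mul_apply, Finset.sum_eq_single j]
  · rw [tauMat, of_apply, if_pos ⟨hj, rfl⟩, one_mul]
  · intro j' _ hj'
    rw [tauMat, of_apply, if_neg fun h => hj' (hσ.injOn hω h.1 hj h.2.symm), zero_mul]
  · simp

-- Named inclusions: `JUM` and `IUL'` are not reducible, so `Subtype.val` on them would make
-- rewriting with the generic `extendZero` lemmas fail on type-correctness.
def JUM.toFin (j : JUM ω) : Fin q := j.1

theorem JUM.mem (j : JUM ω) : memJ ω j.toFin ∨ memM ω j.toFin := j.2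

theorem JUM.toFin_injective : (JUM.toFin : JUM ω → Fin q).Injective := Subtype.val_injective

def IUL'.toFin (i : IUL' ω) : Fin p := i.1

theorem IUL'.mem (i : IUL' ω) : memI ω i.toFin ∨ memL' ω i.toFin := i.2

theorem IUL'.toFin_injective : (IUL'.toFin : IUL' ω → Fin p).Injective := Subtype.val_injective

theorem eta1_eq_extendZero (ω : MatT p q r) (γ : Matrix (JUM ω) (IUL' ω) ℂ) :
    eta1 ω γ = extendZero JUM.toFin IUL'.toFin γ := by
  ext j i
  rw [eta1, of_apply]
  split_ifs with h
  · exact (extendZero_apply JUM.toFin_injective IUL'.toFin_injective γ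
      ⟨j, h.1⟩ ⟨i, h.2⟩).symm
  · rcases not_and_or.mp h with hj | hi
    · exact (extendZero_apply_of_forall_ne_left (by rintro j' rfl; exact hj j'.mem) γ i).symm
    · exact (extendZero_apply_of_forall_ne_right (by rintro i' rfl; exact hi i'.mem) γ j).symm

theorem IsPairing.tauMat_eq_extendZero (hσ : IsPairing ω σ) :
    tauMat ω σ = extendZero IUL'.toFin JUM.toFin (sigMat ω σ) := by
  ext i j
  by_cases hi : memI ω i ∨ memL' ω i
  · by_cases hj : memJ ω j ∨ memM ω j
    · exact (extendZero_apply IUL'.toFin_injective JUM.toFin_injective (sigMat ω σ)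
        ⟨i, hi⟩ ⟨j, hj⟩).symm
    · rw [extendZero_apply_of_forall_ne_right (by rintro j' rfl; exact hj j'.mem), tauMat,
        of_apply, if_neg fun h => hj (Or.inl h.1)]
  · rw [extendZero_apply_of_forall_ne_left (by rintro i' rfl; exact hi i'.mem), tauMat,
      of_apply, if_neg fun (h : memJ ω j ∧ i = σ j) =>
        hi (Or.inl (h.2 ▸ hσ.memI_of_memJ h.1))]

theorem InT.isPartialPerm_toRows₁ (hω : InT ω) : IsPartialPerm ω.toRows₁ := hω.2.1

theorem InT.isPartialPerm_toRows₂ (hω : InT ω) : IsPartialPerm ω.toRows₂ := hω.2.2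

theorem IsPairing.toRows₁_mul_transpose_toRows₂ (hω : InT ω) (hσ : IsPairing ω σ) :
    ω.toRows₁ * ω.toRows₂ᵀ = tauMat ω σ := by
  ext i j
  rw [hω.isPartialPerm_toRows₁.mul_transpose_apply hω.isPartialPerm_toRows₂, tauMat, of_apply]
  simp only [toRows₁_apply, toRows₂_apply]
  refine if_congr ⟨fun ⟨c, h1, h2⟩ => ?_, fun ⟨hj, hi⟩ => hi ▸ hσ j hj⟩ rfl rfl
  obtain ⟨hj, rfl⟩ := hσ.memJ_and_eq hω h1 h2
  exact ⟨hj, rfl⟩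

theorem InT.toRows₂_mul_transpose_toRows₂_mul_eta1 (hω : InT ω)
    (γ : Matrix (JUM ω) (IUL' ω) ℂ) :
    ω.toRows₂ * ω.toRows₂ᵀ * eta1 ω γ = eta1 ω γ := by
  have key : ω.toRows₂ * (ω.toRows₂ᵀ * inclMatrix ℂ (JUM.toFin (ω := ω))) =
      inclMatrix ℂ JUM.toFin := by
    rw [← Matrix.mul_assoc, mul_inclMatrix]
    ext j j'
    rw [submatrix_apply, id,
      hω.isPartialPerm_toRows₂.mul_transpose_apply hω.isPartialPerm_toRows₂, inclMatrix,
      submatrix_apply, id, one_apply]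
    simp only [toRows₂_apply]
    obtain ⟨c, hc⟩ : ∃ c, ω (.inr j'.toFin) c = 1 :=
      j'.mem.elim (fun ⟨c, h, _⟩ => ⟨c, h⟩) fun ⟨c, h, _⟩ => ⟨c, h⟩
    exact if_congr
      ⟨fun ⟨c', h1, h2⟩ => hω.eq_of_bot_col h1 h2, fun h => ⟨c, h ▸ hc, hc⟩⟩ rfl rfl
  simp only [eta1_eq_extendZero, extendZero, Matrix.mul_assoc]
  rw [← Matrix.mul_assoc ω.toRows₂ᵀ, ← Matrix.mul_assoc ω.toRows₂, key]

theorem IsPairing.eta1_mul_toRows₁ (hω : InT ω) (hσ : IsPairing ω σ)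
    (γ : Matrix (JUM ω) (IUL' ω) ℂ) :
    eta1 ω γ * ω.toRows₁ = eta1 ω γ * (tauMat ω σ * ω.toRows₂) := by
  have key : (inclMatrix ℂ (IUL'.toFin (ω := ω)))ᵀ * ω.toRows₁ =
      (inclMatrix ℂ (IUL'.toFin (ω := ω)))ᵀ * (tauMat ω σ * ω.toRows₂) := by
    rw [transpose_inclMatrix_mul, transpose_inclMatrix_mul]
    ext i c
    rw [submatrix_apply, submatrix_apply, id, toRows₁_apply]
    rcases i.mem with hi | hi
    · obtain ⟨j, hj, hji⟩ := hσ.exists_of_memI hω hi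
      rw [← hji, hσ.tauMat_mul_apply hω hj, toRows₂_apply, hσ.row_eq hω hj]
    · rw [tauMat_mul_apply_of_forall_ne, hi c]
      intro j hj h
      obtain ⟨c', hc', -⟩ := hσ.memI_of_memJ hj
      rw [h, hi c'] at hc'
      exact zero_ne_one hc'
  simp only [eta1_eq_extendZero, extendZero, Matrix.mul_assoc, key]

section relations

variable {x : Matrix (Fin p ⊕ Fin q) (Fin p ⊕ Fin q) ℂ}

theorem exists_mulVec_eq_of_range_le (hx : LinearMap.range x.mulVecLin ≤ colSpace ω)
    (k : Fin p ⊕ Fin q) : ∃ u, ω *ᵥ u = x.col k :=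
  hx ⟨Pi.single k 1, mulVec_single_one x k⟩

theorem apply_inr_eq_zero_of_range_le (hx : LinearMap.range x.mulVecLin ≤ colSpace ω)
    {j : Fin q} (hj : memM' ω j) (k : Fin p ⊕ Fin q) : x (.inr j) k = 0 := by
  obtain ⟨u, hu⟩ := exists_mulVec_eq_of_range_le hx k
  rw [← col_apply x, ← hu, mulVec, show ω (.inr j) = 0 from funext hj, zero_dotProduct]

theorem IsPairing.apply_inl_eq_of_range_le (hω : InT ω) (hσ : IsPairing ω σ)
    (hx : LinearMap.range x.mulVecLin ≤ colSpace ω) {j : Fin q} (hj : memJ ω j)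
    (k : Fin p ⊕ Fin q) : x (.inl (σ j)) k = x (.inr j) k := by
  obtain ⟨u, hu⟩ := exists_mulVec_eq_of_range_le hx k
  rw [← col_apply x, ← col_apply x, ← hu, mulVec, mulVec, hσ.row_eq hω hj]

theorem mulVec_col_eq_zero_of_colSpace_le_ker (hx : colSpace ω ≤ LinearMap.ker x.mulVecLin)
    (c : Fin r) : x *ᵥ ω.col c = 0 :=
  hx ⟨Pi.single c 1, mulVec_single_one ω c⟩

theorem apply_inl_eq_zero_of_colSpace_le_ker (hx : colSpace ω ≤ LinearMap.ker x.mulVecLin)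
    {i : Fin p} (hi : memL ω i) (k : Fin p ⊕ Fin q) : x k (.inl i) = 0 := by
  obtain ⟨c, hc, h0⟩ := hi
  have hcol : ω.col c = Pi.single (.inl i) 1 := by
    ext k'
    by_cases hk' : k' = .inl i
    · rw [hk', col_apply, hc, Pi.single_eq_same]
    · rw [col_apply, h0 k' hk', Pi.single_eq_of_ne hk']
  have h := mulVec_col_eq_zero_of_colSpace_le_ker hx c
  rw [hcol, mulVec_single_one] at h
  exact congr_fun h k

theorem IsPairing.apply_add_apply_eq_zero_of_colSpace_le_ker (hω : InT ω) (hσ : IsPairing ω σ)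
    (hx : colSpace ω ≤ LinearMap.ker x.mulVecLin) {j : Fin q} (hj : memJ ω j)
    (k : Fin p ⊕ Fin q) : x k (.inl (σ j)) + x k (.inr j) = 0 := by
  obtain ⟨c, h1, h2⟩ := hσ j hj
  have hcol : ω.col c = Pi.single (.inl (σ j)) 1 + Pi.single (.inr j) 1 := by
    ext (i | j')
    · by_cases hi : i = σ j
      · simp [hi, h1]
      · simp [hi, (hω.entry_cases _ c).resolve_right fun h => hi (hω.eq_of_top_col h h1)]
    · by_cases hj' : j' = j
      · simp [hj', h2]
      · simp [hj', (hω.entry_cases _ c).resolve_right fun h => hj' (hω.eq_of_bot_col h h2)]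
  have h := congr_fun (mulVec_col_eq_zero_of_colSpace_le_ker hx c) k
  rwa [hcol, mulVec_add, mulVec_single_one, mulVec_single_one, Pi.add_apply, col_apply,
    col_apply] at h

end relations

theorem eta1_add (ω : MatT p q r) (γ γ' : Matrix (JUM ω) (IUL' ω) ℂ) :
    eta1 ω (γ + γ') = eta1 ω γ + eta1 ω γ' := by
  simp only [eta1_eq_extendZero, extendZero_add]

theorem eta1_smul (ω : MatT p q r) (z : ℂ) (γ : Matrix (JUM ω) (IUL' ω) ℂ) :
    eta1 ω (z • γ) = z • eta1 ω γ := by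
  simp only [eta1_eq_extendZero, extendZero_smul]

theorem eta1_injective (ω : MatT p q r) : (eta1 ω).Injective := by
  simpa only [funext (eta1_eq_extendZero ω)] using
    extendZero_injective (α := ℂ) JUM.toFin_injective IUL'.toFin_injective

theorem IsPairing.mem_GammaSet_iff (hσ : IsPairing ω σ) (γ : Matrix (JUM ω) (IUL' ω) ℂ) :
    γ ∈ GammaSet ω σ ↔ (tauMat ω σ * eta1 ω γ).StrictBlockTriangular id ∧
      (eta1 ω γ * tauMat ω σ).StrictBlockTriangular id := by
  rw [eta1_eq_extendZero, hσ.tauMat_eq_extendZero, extendZero_mul JUM.toFin_injective,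
    extendZero_mul IUL'.toFin_injective, strictBlockTriangular_extendZero_iff IUL'.toFin_injective,
    strictBlockTriangular_extendZero_iff JUM.toFin_injective]
  exact Iff.rfl

theorem IsPairing.eta1_pow_mul (hσ : IsPairing ω σ) (γ : Matrix (JUM ω) (IUL' ω) ℂ)
    (k : ℕ) :
    eta1 ω ((γ * sigMat ω σ) ^ k * γ) = (eta1 ω γ * tauMat ω σ) ^ k * eta1 ω γ := by
  rw [eta1_eq_extendZero, eta1_eq_extendZero, hσ.tauMat_eq_extendZero,
    extendZero_mul IUL'.toFin_injective, extendZero_pow_mul JUM.toFin_injective]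

theorem IsPairing.mul_mul_transpose_toRows₂_eta1 (hω : InT ω) (hσ : IsPairing ω σ)
    (γ : Matrix (JUM ω) (IUL' ω) ℂ) :
    ω * (ω.toRows₂ᵀ * eta1 ω γ) = fromRows (tauMat ω σ * eta1 ω γ) (eta1 ω γ) := by
  calc ω * (ω.toRows₂ᵀ * eta1 ω γ)
      = fromRows ω.toRows₁ ω.toRows₂ * (ω.toRows₂ᵀ * eta1 ω γ) := by
        rw [fromRows_toRows]
    _ = fromRows (tauMat ω σ * eta1 ω γ) (eta1 ω γ) := by
      rw [fromRows_mul, ← Matrix.mul_assoc, ← Matrix.mul_assoc,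
        hσ.toRows₁_mul_transpose_toRows₂ hω, hω.toRows₂_mul_transpose_toRows₂_mul_eta1]

theorem IsPairing.fromBlocks_mem_Dset (hω : InT ω) (hσ : IsPairing ω σ)
    {γ : Matrix (JUM ω) (IUL' ω) ℂ} (hγ : γ ∈ GammaSet ω σ) :
    fromBlocks (tauMat ω σ * eta1 ω γ) (-(tauMat ω σ * eta1 ω γ * tauMat ω σ))
      (eta1 ω γ) (-(eta1 ω γ * tauMat ω σ)) ∈ Dset ω := by
  set c := eta1 ω γ
  set τ := tauMat ω σ
  obtain ⟨ha, hd⟩ := (hσ.mem_GammaSet_iff γ).mp hγ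
  have hfac : fromBlocks (τ * c) (-(τ * c * τ)) c (-(c * τ)) =
      ω * (ω.toRows₂ᵀ * c) * fromCols (1 : Matrix (Fin p) (Fin p) ℂ) (-τ) := by
    rw [hσ.mul_mul_transpose_toRows₂_eta1 hω, fromRows_mul_fromCols, Matrix.mul_one,
      Matrix.mul_one, Matrix.mul_neg, Matrix.mul_neg]
  have hcol :
      fromCols (1 : Matrix (Fin p) (Fin p) ℂ) (-τ) * ω = ω.toRows₁ - τ * ω.toRows₂ := by
    conv_lhs => rw [← fromRows_toRows ω]
    rw [fromCols_mul_fromRows, Matrix.one_mul, Matrix.neg_mul, sub_eq_add_neg]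
  have hc : c * (ω.toRows₁ - τ * ω.toRows₂) = 0 := by
    rw [Matrix.mul_sub, hσ.eta1_mul_toRows₁ hω, sub_self]
  refine ⟨fun i j h => ha h, fun i j h => hd.neg h, ?_, ?_⟩
  · rw [hfac, Matrix.mul_assoc, mulVecLin_mul]
    exact LinearMap.range_comp_le_range _ _
  · rw [colSpace, LinearMap.range_le_ker_iff, ← mulVecLin_mul, hfac, Matrix.mul_assoc, hcol,
      Matrix.mul_assoc, Matrix.mul_assoc, hc, Matrix.mul_zero, Matrix.mul_zero, mulVecLin_zero]

section restriction

variable {a : Matrix (Fin p) (Fin p) ℂ} {b : Matrix (Fin p) (Fin q) ℂ}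
  {c : Matrix (Fin q) (Fin p) ℂ} {d : Matrix (Fin q) (Fin q) ℂ}

theorem InT.eta1_submatrix (hω : InT ω) (hx : fromBlocks a b c d ∈ Dset ω) :
    eta1 ω (c.submatrix JUM.toFin IUL'.toFin) = c := by
  ext j i
  rw [eta1, of_apply]
  split_ifs with h
  · rfl
  · rcases not_and_or.mp h with hj | hi
    · exact (apply_inr_eq_zero_of_range_le hx.2.2.1 (hω.memM'_of_not hj) (.inl i)).symm
    · exact (apply_inl_eq_zero_of_colSpace_le_ker hx.2.2.2 (hω.memL_of_not hi) (.inr j)).symm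

theorem IsPairing.submatrix_mem_GammaSet (hω : InT ω) (hσ : IsPairing ω σ)
    (hx : fromBlocks a b c d ∈ Dset ω) :
    c.submatrix JUM.toFin IUL'.toFin ∈ GammaSet ω σ := by
  rw [hσ.mem_GammaSet_iff, hω.eta1_submatrix hx]
  refine ⟨fun i i' hii' => ?_, fun j j' hjj' => ?_⟩
  · by_cases hi : ∃ j, memJ ω j ∧ σ j = i
    · obtain ⟨j, hj, rfl⟩ := hi
      rw [hσ.tauMat_mul_apply hω hj]
      exact (hσ.apply_inl_eq_of_range_le hω hx.2.2.1 hj (.inl i')).symm.trans (hx.1 _ _ hii')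
    · exact tauMat_mul_apply_of_forall_ne (fun j hj h => hi ⟨j, hj, h⟩) c i'
  · by_cases hj' : memJ ω j'
    · have h := hσ.apply_add_apply_eq_zero_of_colSpace_le_ker hω hx.2.2.2 hj' (.inr j)
      rw [hx.2.1 j j' hjj', add_zero] at h
      rwa [mul_tauMat_apply_of_memJ hj']
    · exact mul_tauMat_apply_of_not_memJ hj' c j

end restriction

theorem eta1_bijection_general (p q r : ℕ)
    (ω : MatT p q r) (hω : InT ω) (σ : Fin q → Fin p)
    (hσ : ∀ j, memJ ω j → ∃ c, ω (Sum.inl (σ j)) c = 1 ∧ ω (Sum.inr j) c = 1) :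
    (∀ γ γ' : Matrix (JUM ω) (IUL' ω) ℂ, eta1 ω (γ + γ') = eta1 ω γ + eta1 ω γ') ∧
    (∀ (z : ℂ) (γ : Matrix (JUM ω) (IUL' ω) ℂ), eta1 ω (z • γ) = z • eta1 ω γ) ∧
    Set.BijOn (eta1 ω) (GammaSet ω σ)
      {cm : Matrix (Fin q) (Fin p) ℂ |
        ∃ (a : Matrix (Fin p) (Fin p) ℂ) (b : Matrix (Fin p) (Fin q) ℂ)
          (d : Matrix (Fin q) (Fin q) ℂ), Matrix.fromBlocks a b cm d ∈ Dset ω} ∧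
    (∀ γ ∈ GammaSet ω σ, ∀ l : ℕ,
      eta1 ω ((γ * sigMat ω σ) ^ l * γ) =
        (eta1 ω γ * tauMat ω σ) ^ l * eta1 ω γ) := by
  have hσ : IsPairing ω σ := hσ
  refine ⟨eta1_add ω, eta1_smul ω, ⟨?_, (eta1_injective ω).injOn, ?_⟩,
    fun γ _ l => hσ.eta1_pow_mul γ l⟩
  · exact fun γ hγ => ⟨_, _, _, hσ.fromBlocks_mem_Dset hω hγ⟩
  · rintro c ⟨a, b, d, hx⟩
    exact ⟨_, hσ.submatrix_mem_GammaSet hω hx, hω.eta1_submatrix hx⟩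

/-- `η₁` restricts to a linear bijection from `Γ` onto
`C = {c : ∃ a b d, (a b; c d) ∈ D_ω}`, compatible with the products
`(γς)^ℓ γ ↦ (cτ)^ℓ c`. -/
theorem eta1_bijection (p q r : ℕ) (hr : r ≤ p + q)
    (ω : MatT p q r) (hω : InT ω) (σ : Fin q → Fin p)
    (hσ : ∀ j, memJ ω j → ∃ c, ω (Sum.inl (σ j)) c = 1 ∧ ω (Sum.inr j) c = 1) :
    (∀ γ γ' : Matrix (JUM ω) (IUL' ω) ℂ, eta1 ω (γ + γ') = eta1 ω γ + eta1 ω γ') ∧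
    (∀ (z : ℂ) (γ : Matrix (JUM ω) (IUL' ω) ℂ), eta1 ω (z • γ) = z • eta1 ω γ) ∧
    Set.BijOn (eta1 ω) (GammaSet ω σ)
      {cm : Matrix (Fin q) (Fin p) ℂ |
        ∃ (a : Matrix (Fin p) (Fin p) ℂ) (b : Matrix (Fin p) (Fin q) ℂ)
          (d : Matrix (Fin q) (Fin q) ℂ), Matrix.fromBlocks a b cm d ∈ Dset ω} ∧
    (∀ γ ∈ GammaSet ω σ, ∀ l : ℕ,
      eta1 ω ((γ * sigMat ω σ) ^ l * γ) =
        (eta1 ω γ * tauMat ω σ) ^ l * eta1 ω γ) :=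
  eta1_bijection_general p q r ω hω σ hσ
end
end

section
/- The number of equivalence classes of 𝕋 under the equivalence relation ω ~ ω′ iff ω′ = ω P for some r×r permutation matrix P equals the sum, over all triples of natural numbers (k, s, t) with k + s + t = r, k + s ≤ p and k + t ≤ q, of [p! / (k! · s! · (p−k−s)!)] · [q! / (k! · t! · (q−k−t)!)] · k!. -/
open scoped Classical
open Matrix

noncomputable section

/-! The columns of a matrix in `𝕋` are linearly independent, hence distinct and nonzero, and each
has at most one `1` in each block; so the matrix is the list of its column types (`ColType`), and
its class modulo column permutations is the *set* of these types, which may be any `r`-set of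
types using every row at most once. Such a set consists of `s` columns with a single top `1`,
`t` with a single bottom `1`, and `k` with both; the last form a matching between `k` top and `k`
bottom rows avoiding the rows of the others. There are `C(p,k)·q(q-1)⋯(q-k+1)` such matchings and
then `C(p-k,s)·C(q-k,t)` choices of the remaining columns. -/

open Finset Function

theorem Matrix.rank_eq_card_iff_linearIndependent_col {K m n : Type*} [Field K] [Fintype n]
    (A : Matrix m n K) : A.rank = Fintype.card n ↔ LinearIndependent K A.col := by
  rw [rank_eq_finrank_span_cols, linearIndependent_iff_card_eq_finrank_span, Set.finrank, eq_comm]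

theorem linearIndependent_of_forall_exists_coord {ι κ K : Type*} [Fintype ι] [Field K]
    {v : ι → κ → K} (h : ∀ a, ∃ x, v a x ≠ 0 ∧ ∀ b ≠ a, v b x = 0) : LinearIndependent K v := by
  refine Fintype.linearIndependent_iff.2 fun g hg a => ?_
  obtain ⟨x, hax, hbx⟩ := h a
  have := congrFun hg x
  simp only [Finset.sum_apply, Pi.smul_apply, smul_eq_mul, Pi.zero_apply] at this
  rw [Finset.sum_eq_single a (fun b _ hb => by rw [hbx b hb, mul_zero]) (by simp)] at this
  exact (mul_eq_zero.1 this).resolve_right hax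

theorem mul_permMat_apply {m : Type*} {r : ℕ} (A : Matrix m (Fin r) ℂ) (w : Equiv.Perm (Fin r))
    (x : m) (c : Fin r) : (A * permMat w) x c = A x (w c) := by
  simp [permMat, Matrix.mul_apply]

def InjOnSome {ι κ : Type*} (g : ι → Option κ) : Prop :=
  ∀ a b i, g a = some i → g b = some i → a = b

theorem isPartialPerm_of_ite_iff {m n : ℕ} (g : Fin n → Option (Fin m)) :
    IsPartialPerm (Matrix.of fun i c => if g c = some i then (1 : ℂ) else 0) ↔ InjOnSome g := by
  simp only [IsPartialPerm, Matrix.of_apply, ite_eq_right_iff, one_ne_zero, imp_false,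
    ite_eq_left_iff, zero_ne_one, not_not, InjOnSome]
  refine ⟨fun h a b i ha hb => h.2.1 i a b ha hb, fun h => ⟨fun i c => ?_,
    fun i a b ha hb => h a b i ha hb, fun i i' c hi hi' => Option.some_injective _ (hi ▸ hi')⟩⟩
  tauto

theorem exists_option_eq_ite {ι R : Type*} [Zero R] [One R] {u : ι → R}
    (h01 : ∀ i, u i = 0 ∨ u i = 1) (hle : ∀ i i', u i = 1 → u i' = 1 → i = i') :
    ∃ o : Option ι, ∀ i, u i = if o = some i then 1 else 0 := by
  by_cases h : ∃ i, u i = 1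
  · obtain ⟨i, hi⟩ := h
    refine ⟨some i, fun i' => ?_⟩
    split_ifs with e
    · rwa [← Option.some_injective _ e]
    · exact (h01 i').resolve_right fun h1 => e (by rw [hle i i' hi h1])
  · exact ⟨none, fun i => by simpa using (h01 i).resolve_right (not_exists.1 h i)⟩

theorem exists_perm_eq_comp_of_image_eq {α : Type*} [DecidableEq α] {r : ℕ}
    {f g : Fin r → α} (hf : Injective f) (hg : Injective g)
    (h : univ.image f = univ.image g) : ∃ w : Equiv.Perm (Fin r), g = f ∘ w := by
  have hrange : Set.range g = Set.range f := by
    simpa [Set.image_univ] using congrArg (fun s : Finset α => (s : Set α)) h.symm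
  refine ⟨(Equiv.ofInjective g hg).trans
    ((Equiv.setCongr hrange).trans (Equiv.ofInjective f hf).symm), funext fun c => ?_⟩
  simp [Equiv.apply_ofInjective_symm hf]

def quotPermEquivFinset {α : Type*} [DecidableEq α] (r : ℕ) (P : Finset α → Prop) :
    Quot (fun f g : {f : Fin r → α // Injective f ∧ P (univ.image f)} =>
        ∃ w : Equiv.Perm (Fin r), g.1 = f.1 ∘ w) ≃
      {S : Finset α // #S = r ∧ P S} :=
  Equiv.ofBijective
    (Quot.lift (fun f => ⟨univ.image f.1, by
        rw [card_image_of_injective _ f.2.1, card_univ, Fintype.card_fin], f.2.2⟩)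
      (by
        rintro f g ⟨w, hw⟩
        simp only [hw, ← image_image, image_univ_equiv]))
    (by
      refine ⟨?_, ?_⟩
      · rintro ⟨f⟩ ⟨g⟩ h
        exact Quot.sound (exists_perm_eq_comp_of_image_eq f.2.1 g.2.1 (congrArg Subtype.val h))
      · rintro ⟨S, hcard, hS⟩
        let e : Fin r ≃ S := (S.equivFinOfCardEq hcard).symm
        have himage : univ.image (fun c => (e c : α)) = S := by
          ext x
          refine ⟨fun hx => ?_, fun hx => mem_image.2 ⟨e.symm ⟨x, hx⟩, mem_univ _, by simp⟩⟩
          obtain ⟨c, -, rfl⟩ := mem_image.1 hx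
          exact (e c).2
        exact ⟨Quot.mk _ ⟨fun c => e c, fun a b hab => e.injective (Subtype.ext hab),
          himage.symm ▸ hS⟩, Subtype.ext himage⟩)

section Matching

variable {α β : Type*} [Fintype α] [Fintype β] [DecidableEq α] [DecidableEq β]

def IsMatching (M : Finset (α × β)) : Prop :=
  Set.InjOn Prod.fst (M : Set (α × β)) ∧ Set.InjOn Prod.snd (M : Set (α × β))

theorem card_isMatching_image_fst_eq (A : Finset α) :
    #{M : Finset (α × β) | IsMatching M ∧ M.image Prod.fst = A} =
      (Fintype.card β).descFactorial #A := by
  rw [← Fintype.card_coe A, ← Fintype.card_embedding_eq, ← card_univ]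
  symm
  refine card_bij (fun e _ => A.attach.map ⟨fun a => (a.1, e a),
    fun a b h => Subtype.ext (congrArg Prod.fst h)⟩) (fun e _ => ?_) (fun e _ e' _ h => ?_)
    (fun M hM => ?_)
  · refine mem_filter.2 ⟨mem_univ _, ⟨?_, ?_⟩, ?_⟩
    · intro x hx y hy h
      obtain ⟨a, -, rfl⟩ := mem_map.1 hx
      obtain ⟨b, -, rfl⟩ := mem_map.1 hy
      rw [Subtype.ext h]
    · intro x hx y hy h
      obtain ⟨a, -, rfl⟩ := mem_map.1 hx
      obtain ⟨b, -, rfl⟩ := mem_map.1 hy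
      rw [e.injective h]
    · rw [map_eq_image, image_image]
      exact attach_image_val
  · ext a
    obtain ⟨b, -, hb⟩ := mem_map.1 (h ▸ mem_map_of_mem _ (mem_attach A a))
    have h1 : (b : α) = a := congrArg Prod.fst hb
    have h2 : e' b = e a := congrArg Prod.snd hb
    rw [← h2, Subtype.ext h1]
  · obtain ⟨-, hMatch, rfl⟩ := mem_filter.1 hM
    have hex : ∀ a : M.image Prod.fst, ∃ j, (a.1, j) ∈ M := fun a => by
      obtain ⟨x, hx, hxa⟩ := mem_image.1 a.2
      exact ⟨x.2, by rwa [← hxa]⟩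
    choose g hg using hex
    refine ⟨⟨g, fun a b h => Subtype.ext (congrArg Prod.fst (hMatch.2 (hg a) (hg b) h))⟩,
      mem_univ _, eq_of_subset_of_card_le (fun x hx => ?_) ?_⟩
    · obtain ⟨a, -, rfl⟩ := mem_map.1 hx
      exact hg a
    · rw [card_map, card_attach, card_image_of_injOn hMatch.1]

theorem card_isMatching_card_eq (k : ℕ) :
    #{M : Finset (α × β) | IsMatching M ∧ #M = k} =
      (Fintype.card α).choose k * (Fintype.card β).descFactorial k := by
  have hmaps : ∀ M ∈ ({M : Finset (α × β) | IsMatching M ∧ #M = k} : Finset _),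
      M.image Prod.fst ∈ powersetCard k univ := fun M hM => by
    obtain ⟨-, hMatch, rfl⟩ := mem_filter.1 hM
    exact mem_powersetCard.2 ⟨subset_univ _, card_image_of_injOn hMatch.1⟩
  rw [card_eq_sum_card_fiberwise hmaps, ← card_univ, ← card_powersetCard, ← smul_eq_mul,
    ← sum_const]
  refine sum_congr rfl fun A hA => ?_
  rw [filter_filter, ← (mem_powersetCard.1 hA).2, ← card_isMatching_image_fst_eq A]
  congr 1
  refine filter_congr fun M _ => ⟨fun h => ⟨h.1.1, h.2⟩, fun h => ⟨⟨h.1, ?_⟩, h.2⟩⟩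
  rw [← h.2, card_image_of_injOn h.1.1]

/-- The data `(A, B, M)` of a compatible set of column types: top-only rows `A`, bottom-only
rows `B`, and the matching `M` of rows carrying the `1`s of the two-entry columns. -/
def IsAdmissible (x : Finset α × Finset β × Finset (α × β)) : Prop :=
  IsMatching x.2.2 ∧ Disjoint x.1 (x.2.2.image Prod.fst) ∧ Disjoint x.2.1 (x.2.2.image Prod.snd)

theorem card_isAdmissible_card_eq (k s t : ℕ) :
    #{x : Finset α × Finset β × Finset (α × β) |
        IsAdmissible x ∧ #x.2.2 = k ∧ #x.1 = s ∧ #x.2.1 = t} =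
      (Fintype.card α).choose k * (Fintype.card β).descFactorial k *
        ((Fintype.card α - k).choose s * (Fintype.card β - k).choose t) := by
  have hmaps : ∀ x ∈ ({x : Finset α × Finset β × Finset (α × β) |
      IsAdmissible x ∧ #x.2.2 = k ∧ #x.1 = s ∧ #x.2.1 = t} : Finset _),
      x.2.2 ∈ ({M | IsMatching M ∧ #M = k} : Finset _) := fun x hx => by
    simp only [mem_filter, mem_univ, true_and] at hx ⊢
    exact ⟨hx.1.1, hx.2.1⟩
  rw [card_eq_sum_card_fiberwise hmaps, ← card_isMatching_card_eq, ← smul_eq_mul, ← sum_const]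
  refine sum_congr rfl fun M hM => ?_
  obtain ⟨-, hMatch, rfl⟩ := mem_filter.1 hM
  have hfiber : ({x ∈ ({x : Finset α × Finset β × Finset (α × β) |
      IsAdmissible x ∧ #x.2.2 = #M ∧ #x.1 = s ∧ #x.2.1 = t} : Finset _) | x.2.2 = M}) =
      powersetCard s (M.image Prod.fst)ᶜ ×ˢ powersetCard t (M.image Prod.snd)ᶜ ×ˢ {M} := by
    ext ⟨A, B, M'⟩
    simp only [mem_filter, mem_univ, true_and, mem_product, mem_powersetCard,
      subset_compl_iff_disjoint_right, mem_singleton]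
    constructor
    · rintro ⟨⟨⟨-, hA, hB⟩, -, hs, ht⟩, rfl⟩
      exact ⟨⟨hA, hs⟩, ⟨hB, ht⟩, rfl⟩
    · rintro ⟨⟨hA, hs⟩, ⟨hB, ht⟩, rfl⟩
      exact ⟨⟨⟨hMatch, hA, hB⟩, rfl, hs, ht⟩, rfl⟩
  rw [hfiber, card_product, card_product, card_singleton, mul_one, card_powersetCard,
    card_powersetCard, card_compl, card_compl, card_image_of_injOn hMatch.1,
    card_image_of_injOn hMatch.2]

theorem IsAdmissible.card_add_card_le {x : Finset α × Finset β × Finset (α × β)}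
    (hx : IsAdmissible x) :
    #x.2.2 + #x.1 ≤ Fintype.card α ∧ #x.2.2 + #x.2.1 ≤ Fintype.card β := by
  obtain ⟨hM, hA, hB⟩ := hx
  constructor
  · calc #x.2.2 + #x.1 = #(x.1 ∪ x.2.2.image Prod.fst) := by
          rw [card_union_of_disjoint hA, card_image_of_injOn hM.1, add_comm]
      _ ≤ _ := card_le_univ _
  · calc #x.2.2 + #x.2.1 = #(x.2.1 ∪ x.2.2.image Prod.snd) := by
          rw [card_union_of_disjoint hB, card_image_of_injOn hM.2, add_comm]
      _ ≤ _ := card_le_univ _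

theorem card_isAdmissible_eq_sum (r : ℕ) :
    #{x : Finset α × Finset β × Finset (α × β) | #x.1 + #x.2.1 + #x.2.2 = r ∧ IsAdmissible x} =
      ∑ y ∈ (range (r + 1) ×ˢ range (r + 1) ×ˢ range (r + 1)).filter (fun y =>
          y.1 + y.2.1 + y.2.2 = r ∧ y.1 + y.2.1 ≤ Fintype.card α ∧ y.1 + y.2.2 ≤ Fintype.card β),
        (Fintype.card α).choose y.1 * (Fintype.card β).descFactorial y.1 *
          ((Fintype.card α - y.1).choose y.2.1 * (Fintype.card β - y.1).choose y.2.2) := by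
  have hsizes : ∀ x ∈ ({x : Finset α × Finset β × Finset (α × β) |
      #x.1 + #x.2.1 + #x.2.2 = r ∧ IsAdmissible x} : Finset _),
      (#x.2.2, #x.1, #x.2.1) ∈ (range (r + 1) ×ˢ range (r + 1) ×ˢ range (r + 1)).filter
        (fun y => y.1 + y.2.1 + y.2.2 = r ∧
          y.1 + y.2.1 ≤ Fintype.card α ∧ y.1 + y.2.2 ≤ Fintype.card β) := fun x hx => by
    obtain ⟨-, hr, hx⟩ := mem_filter.1 hx
    have := hx.card_add_card_le
    simp only [mem_filter, mem_product, mem_range]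
    omega
  rw [card_eq_sum_card_fiberwise hsizes]
  refine sum_congr rfl fun ⟨k, s, t⟩ hkst => ?_
  obtain ⟨-, hr, -⟩ := mem_filter.1 hkst
  rw [filter_filter, ← card_isAdmissible_card_eq]
  refine congrArg card (filter_congr fun x _ => ?_)
  simp only [Prod.mk.injEq] at hr ⊢
  exact ⟨fun h => ⟨h.1.2, h.2⟩, fun ⟨hx, hk, hs, ht⟩ => ⟨⟨by omega, hx⟩, hk, hs, ht⟩⟩

end Matching

theorem Nat.factorial_div_factorial_mul_factorial_mul_factorial {n k s : ℕ} (h : k + s ≤ n) :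
    n.factorial / (k.factorial * s.factorial * (n - k - s).factorial) =
      n.choose k * (n - k).choose s := by
  refine Nat.div_eq_of_eq_mul_left (by positivity) ?_
  calc n.factorial = n.choose k * k.factorial * (n - k).factorial :=
        (Nat.choose_mul_factorial_mul_factorial (by omega)).symm
    _ = n.choose k * k.factorial * ((n - k).choose s * s.factorial * (n - k - s).factorial) := by
      rw [Nat.choose_mul_factorial_mul_factorial (by omega : s ≤ n - k)]
    _ = _ := by ring

/-- The possible nonzero columns of a matrix in `𝕋`: a single `1` in top row `i` (`inl i`), in
bottom row `j` (`inr (inl j)`), or in both (`inr (inr (i, j))`). -/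
abbrev ColType (p q : ℕ) := Fin p ⊕ (Fin q ⊕ Fin p × Fin q)

namespace ColType

variable {p q r : ℕ}

def top : ColType p q → Option (Fin p)
  | .inl i => some i
  | .inr (.inl _) => none
  | .inr (.inr x) => some x.1

def bot : ColType p q → Option (Fin q)
  | .inl _ => none
  | .inr (.inl j) => some j
  | .inr (.inr x) => some x.2

theorem ext_top_bot {c d : ColType p q} (htop : c.top = d.top) (hbot : c.bot = d.bot) :
    c = d := by
  rcases c with i | j | x <;> rcases d with i' | j' | x' <;>
    simp_all [top, bot, Prod.ext_iff]

theorem exists_top_eq_and_bot_eq {o₁ : Option (Fin p)} {o₂ : Option (Fin q)}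
    (h : o₁.isSome ∨ o₂.isSome) : ∃ c : ColType p q, c.top = o₁ ∧ c.bot = o₂ := by
  rcases o₁ with _ | i <;> rcases o₂ with _ | j
  · simp at h
  · exact ⟨.inr (.inl j), rfl, rfl⟩
  · exact ⟨.inl i, rfl, rfl⟩
  · exact ⟨.inr (.inr (i, j)), rfl, rfl⟩

theorem top_isSome_or_bot_isSome (c : ColType p q) : c.top.isSome ∨ c.bot.isSome := by
  rcases c with i | j | x <;> simp [top, bot]

def toVec (c : ColType p q) : Fin p ⊕ Fin q → ℂ :=
  Sum.elim (fun i => if c.top = some i then 1 else 0) (fun j => if c.bot = some j then 1 else 0)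

theorem toVec_injective : Injective (toVec : ColType p q → Fin p ⊕ Fin q → ℂ) := by
  intro c d h
  refine ext_top_bot (Option.ext fun i => ?_) (Option.ext fun j => ?_)
  · have := congrFun h (.inl i)
    simp only [toVec, Sum.elim_inl] at this
    split_ifs at this <;> simp_all
  · have := congrFun h (.inr j)
    simp only [toVec, Sum.elim_inr] at this
    split_ifs at this <;> simp_all

theorem exists_toVec_eq {v : Fin p ⊕ Fin q → ℂ} (hv : v ≠ 0) (h01 : ∀ x, v x = 0 ∨ v x = 1)
    (htop : ∀ i i', v (.inl i) = 1 → v (.inl i') = 1 → i = i')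
    (hbot : ∀ j j', v (.inr j) = 1 → v (.inr j') = 1 → j = j') :
    ∃ c : ColType p q, c.toVec = v := by
  obtain ⟨o₁, ho₁⟩ := exists_option_eq_ite (fun i => h01 (.inl i)) htop
  obtain ⟨o₂, ho₂⟩ := exists_option_eq_ite (fun j => h01 (.inr j)) hbot
  have hv' : v = Sum.elim (fun i => if o₁ = some i then 1 else 0)
      (fun j => if o₂ = some j then 1 else 0) := funext fun x => by cases x <;> simp [ho₁, ho₂]
  have hsome : o₁.isSome ∨ o₂.isSome := by
    by_contra! h
    simp only [Bool.not_eq_true, Option.isSome_eq_false_iff, Option.isNone_iff_eq_none] at h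
    exact hv (funext fun x => by cases x <;> simp [hv', h.1, h.2])
  obtain ⟨c, hc₁, hc₂⟩ := exists_top_eq_and_bot_eq hsome
  exact ⟨c, by rw [hv', toVec, hc₁, hc₂]⟩

def Compatible (S : Finset (ColType p q)) : Prop :=
  (∀ c ∈ S, ∀ d ∈ S, ∀ i, c.top = some i → d.top = some i → c = d) ∧
  (∀ c ∈ S, ∀ d ∈ S, ∀ j, c.bot = some j → d.bot = some j → c = d)

theorem injective_and_compatible_image_iff (f : Fin r → ColType p q) :
    Injective f ∧ Compatible (univ.image f) ↔ InjOnSome (top ∘ f) ∧ InjOnSome (bot ∘ f) := by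
  simp only [Compatible, mem_image, mem_univ, true_and, forall_exists_index,
    forall_apply_eq_imp_iff, InjOnSome, Function.comp_apply]
  refine ⟨fun ⟨hf, htop, hbot⟩ => ⟨fun a b i ha hb => hf (htop a b i ha hb),
    fun a b j ha hb => hf (hbot a b j ha hb)⟩, fun ⟨htop, hbot⟩ => ⟨fun a b hab => ?_,
    fun a b i ha hb => congrArg f (htop a b i ha hb),
    fun a b j ha hb => congrArg f (hbot a b j ha hb)⟩⟩
  rcases (f a).top_isSome_or_bot_isSome with h | h
  · obtain ⟨i, hi⟩ := Option.isSome_iff_exists.1 h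
    exact htop a b i hi (hab ▸ hi)
  · obtain ⟨j, hj⟩ := Option.isSome_iff_exists.1 h
    exact hbot a b j hj (hab ▸ hj)

theorem linearIndependent_toVec_comp {f : Fin r → ColType p q} (htop : InjOnSome (top ∘ f))
    (hbot : InjOnSome (bot ∘ f)) : LinearIndependent ℂ (toVec ∘ f) := by
  refine linearIndependent_of_forall_exists_coord fun a => ?_
  rcases (f a).top_isSome_or_bot_isSome with h | h
  · obtain ⟨i, hi⟩ := Option.isSome_iff_exists.1 h
    refine ⟨.inl i, by simp [toVec, hi], fun b hb => ?_⟩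
    simpa [toVec] using fun hbi => hb (htop b a i hbi hi)
  · obtain ⟨j, hj⟩ := Option.isSome_iff_exists.1 h
    refine ⟨.inr j, by simp [toVec, hj], fun b hb => ?_⟩
    simpa [toVec] using fun hbj => hb (hbot b a j hbj hj)

def splitEquiv (p q : ℕ) :
    Finset (ColType p q) ≃ Finset (Fin p) × Finset (Fin q) × Finset (Fin p × Fin q) :=
  Finset.sumEquiv.toEquiv.trans (Equiv.prodCongr (Equiv.refl _) Finset.sumEquiv.toEquiv)

theorem splitEquiv_apply (S : Finset (ColType p q)) :
    splitEquiv p q S = (S.toLeft, S.toRight.toLeft, S.toRight.toRight) := rfl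

theorem top_eq_some_iff {c : ColType p q} {i : Fin p} :
    c.top = some i ↔ c = .inl i ∨ ∃ j, c = .inr (.inr (i, j)) := by
  rcases c with i' | j' | ⟨i', j'⟩ <;> simp [top, eq_comm]

theorem bot_eq_some_iff {c : ColType p q} {j : Fin q} :
    c.bot = some j ↔ c = .inr (.inl j) ∨ ∃ i, c = .inr (.inr (i, j)) := by
  rcases c with i' | j' | ⟨i', j'⟩ <;> simp [bot, eq_comm]

theorem compatible_iff_isAdmissible (S : Finset (ColType p q)) :
    Compatible S ↔ IsAdmissible (splitEquiv p q S) := by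
  simp only [splitEquiv_apply, Compatible, IsAdmissible, IsMatching, Set.InjOn, disjoint_left,
    mem_image, mem_coe, mem_toLeft, mem_toRight]
  constructor
  · rintro ⟨htop, hbot⟩
    refine ⟨⟨fun x hx y hy h => ?_, fun x hx y hy h => ?_⟩, fun i hi ⟨x, hx, hxi⟩ => ?_,
      fun j hj ⟨x, hx, hxj⟩ => ?_⟩
    · simpa using htop _ hx _ hy x.1 rfl (by simp [top, h])
    · simpa using hbot _ hx _ hy x.2 rfl (by simp [bot, h])
    · simpa using htop _ hi _ hx i rfl (by simp [top, hxi])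
    · simpa using hbot _ hj _ hx j rfl (by simp [bot, hxj])
  · rintro ⟨⟨hfst, hsnd⟩, hA, hB⟩
    refine ⟨fun c hc d hd i hci hdi => ?_, fun c hc d hd j hcj hdj => ?_⟩
    · rw [top_eq_some_iff] at hci hdi
      rcases hci with rfl | ⟨j, rfl⟩ <;> rcases hdi with rfl | ⟨j', rfl⟩
      · rfl
      · exact absurd ⟨_, hd, rfl⟩ (hA hc)
      · exact absurd ⟨_, hc, rfl⟩ (hA hd)
      · rw [hfst hc hd rfl]
    · rw [bot_eq_some_iff] at hcj hdj
      rcases hcj with rfl | ⟨i, rfl⟩ <;> rcases hdj with rfl | ⟨i', rfl⟩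
      · rfl
      · exact absurd ⟨_, hd, rfl⟩ (hB hc)
      · exact absurd ⟨_, hc, rfl⟩ (hB hd)
      · rw [hsnd hc hd rfl]

theorem card_compatible_eq_card_isAdmissible (r : ℕ) :
    #{S : Finset (ColType p q) | #S = r ∧ Compatible S} =
      #{x : Finset (Fin p) × Finset (Fin q) × Finset (Fin p × Fin q) |
        #x.1 + #x.2.1 + #x.2.2 = r ∧ IsAdmissible x} := by
  refine card_equiv (splitEquiv p q) fun S => ?_
  simp only [mem_filter, mem_univ, true_and, compatible_iff_isAdmissible, splitEquiv_apply,
    add_assoc, card_toLeft_add_card_toRight]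

end ColType

section

open ColType

variable {p q r : ℕ}

def ofCols (f : Fin r → ColType p q) : MatT p q r :=
  Matrix.of fun x c => (f c).toVec x

theorem ofCols_injective : Injective (ofCols : (Fin r → ColType p q) → MatT p q r) :=
  fun _ _ h => funext fun c => toVec_injective (funext fun x => congrFun (congrFun h x) c)

theorem ofCols_mul_permMat (f : Fin r → ColType p q) (w : Equiv.Perm (Fin r)) :
    ofCols f * permMat w = ofCols (f ∘ w) := by
  ext x c
  rw [mul_permMat_apply]
  rfl

theorem inT_ofCols_iff (f : Fin r → ColType p q) :
    InT (ofCols f) ↔ InjOnSome (top ∘ f) ∧ InjOnSome (bot ∘ f) := by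
  have hrank : (ofCols f).rank = r ↔ LinearIndependent ℂ (toVec ∘ f) := by
    have h := (ofCols f).rank_eq_card_iff_linearIndependent_col
    rwa [Fintype.card_fin] at h
  rw [InT, hrank]
  change _ ∧ IsPartialPerm (Matrix.of fun i c => if (top ∘ f) c = some i then (1 : ℂ) else 0) ∧
    IsPartialPerm (Matrix.of fun j c => if (bot ∘ f) c = some j then (1 : ℂ) else 0) ↔ _
  rw [isPartialPerm_of_ite_iff, isPartialPerm_of_ite_iff]
  exact ⟨fun h => h.2, fun h => ⟨linearIndependent_toVec_comp h.1 h.2, h⟩⟩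

theorem exists_ofCols_eq {ω : MatT p q r} (hω : InT ω) : ∃ f, ofCols f = ω := by
  have hli : LinearIndependent ℂ ω.col := (ω.rank_eq_card_iff_linearIndependent_col).1
    (by rw [hω.1, Fintype.card_fin])
  have hcol : ∀ c, ∃ x : ColType p q, x.toVec = ω.col c := fun c =>
    exists_toVec_eq (hli.ne_zero c)
      (fun x => by rcases x with i | j; exacts [hω.2.1.1 i c, hω.2.2.1 j c])
      (fun i i' => hω.2.1.2.2 i i' c) (fun j j' => hω.2.2.2.2 j j' c)
  choose f hf using hcol
  exact ⟨f, Matrix.ext fun x c => congrFun (hf c) x⟩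

def compatibleColsEquiv (p q r : ℕ) :
    {f : Fin r → ColType p q // Injective f ∧ Compatible (univ.image f)} ≃
      {ω : MatT p q r // InT ω} :=
  Equiv.ofBijective
    (fun f => ⟨ofCols f.1, (inT_ofCols_iff f.1).2 ((injective_and_compatible_image_iff f.1).1 f.2)⟩)
    ⟨fun _ _ h => Subtype.ext (ofCols_injective (congrArg Subtype.val h)), fun ω => by
      obtain ⟨f, hf⟩ := exists_ofCols_eq ω.2
      exact ⟨⟨f, (injective_and_compatible_image_iff f).2 ((inT_ofCols_iff f).1 (hf ▸ ω.2))⟩,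
        Subtype.ext hf⟩⟩

theorem card_quot_eq_card_compatible (p q r : ℕ) :
    Nat.card (Quot fun ω ω' : {ω : MatT p q r // InT ω} =>
        ∃ w : Equiv.Perm (Fin r), ω'.1 = ω.1 * permMat w) =
      #{S : Finset (ColType p q) | #S = r ∧ Compatible S} := by
  have hrel : ∀ f g, (∃ w : Equiv.Perm (Fin r), g.1 = f.1 ∘ w) ↔
      ∃ w, (compatibleColsEquiv p q r g).1 = (compatibleColsEquiv p q r f).1 * permMat w :=
    fun f g => exists_congr fun w => by
      change _ ↔ ofCols g.1 = ofCols f.1 * permMat w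
      rw [ofCols_mul_permMat, ofCols_injective.eq_iff]
  rw [← Nat.card_congr (Quot.congr _ hrel), Nat.card_congr (quotPermEquivFinset r _),
    Nat.card_eq_fintype_card, Fintype.card_subtype]

end

theorem card_T_mod_column_permutations_general (p q r : ℕ) :
    Nat.card (Quot fun ω ω' : {ω : MatT p q r // InT ω} =>
        ∃ w : Equiv.Perm (Fin r), ω'.1 = ω.1 * permMat w) =
      ∑ x ∈ (Finset.range (r + 1) ×ˢ Finset.range (r + 1) ×ˢ
          Finset.range (r + 1)).filter
          (fun x => x.1 + x.2.1 + x.2.2 = r ∧ x.1 + x.2.1 ≤ p ∧ x.1 + x.2.2 ≤ q),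
        (Nat.factorial p /
            (Nat.factorial x.1 * Nat.factorial x.2.1 *
              Nat.factorial (p - x.1 - x.2.1))) *
          (Nat.factorial q /
            (Nat.factorial x.1 * Nat.factorial x.2.2 *
              Nat.factorial (q - x.1 - x.2.2))) *
          Nat.factorial x.1 := by
  rw [card_quot_eq_card_compatible, ColType.card_compatible_eq_card_isAdmissible,
    card_isAdmissible_eq_sum, Fintype.card_fin, Fintype.card_fin]
  refine sum_congr rfl fun ⟨k, s, t⟩ hkst => ?_
  obtain ⟨-, -, hp, hq⟩ := mem_filter.1 hkst
  rw [Nat.factorial_div_factorial_mul_factorial_mul_factorial hp,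
    Nat.factorial_div_factorial_mul_factorial_mul_factorial hq,
    Nat.descFactorial_eq_factorial_mul_choose]
  ring

/-- the number of classes of `𝕋` modulo column permutations equals
`∑_{k+s+t=r, k+s≤p, k+t≤q} (p choose k,s,p-k-s)(q choose k,t,q-k-t) k!`. -/
theorem card_T_mod_column_permutations (p q r : ℕ) (hr : r ≤ p + q) :
    Nat.card (Quot fun ω ω' : {ω : MatT p q r // InT ω} =>
        ∃ w : Equiv.Perm (Fin r), ω'.1 = ω.1 * permMat w) =
      ∑ x ∈ (Finset.range (r + 1) ×ˢ Finset.range (r + 1) ×ˢ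
          Finset.range (r + 1)).filter
          (fun x => x.1 + x.2.1 + x.2.2 = r ∧ x.1 + x.2.1 ≤ p ∧ x.1 + x.2.2 ≤ q),
        (Nat.factorial p /
            (Nat.factorial x.1 * Nat.factorial x.2.1 *
              Nat.factorial (p - x.1 - x.2.1))) *
          (Nat.factorial q /
            (Nat.factorial x.1 * Nat.factorial x.2.2 *
              Nat.factorial (q - x.1 - x.2.2))) *
          Nat.factorial x.1 :=
  card_T_mod_column_permutations_general p q r
end
end
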